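/- arXiv:2412.11160 — 10 statements merged into one kernel-verified Lean document; each statement's English description precedes it below -/
import Mathlib

section
/- Let G=(V,E,w) be a connected weighted undirected graph with Laplacian matrix L. Then the walk centrality of any vertex j satisfies H_j = d · (e_j − π)^T L† (e_j − π), where L† is the Moore–Penrose pseudoinverse of L and e_j is the j-th standard basis vector. -/
/-!
Fix the target `j` and let `h = H(·, j)`. The first-step equations say `(L h) i = d_i` for every
`i ≠ j`; since `L` is symmetric with zero row sums, the entries of `L h` sum to zero, which forces
`(L h) j = d_j - d`, i.e. `L h = -d (e_j - π)`. Hence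
`d (e_j - π)ᵀ L† (e_j - π) = d⁻¹ (L h)ᵀ L† (L h) = d⁻¹ hᵀ L h = -hᵀ (e_j - π) = πᵀ h = H_j`,
where the second equality needs only `L L† L = L` and the fourth uses `h_j = 0`.
-/

open Matrix Finset

variable {ι R : Type*} [Fintype ι]

namespace Matrix.IsSymm

theorem mulVec_dotProduct_mulVec_mulVec [CommSemiring R] {L X : Matrix ι ι R}
    (hL : L.IsSymm) (hX : L * X * L = L) (h : ι → R) :
    (L *ᵥ h) ⬝ᵥ (X *ᵥ (L *ᵥ h)) = h ⬝ᵥ (L *ᵥ h) :=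
  calc (L *ᵥ h) ⬝ᵥ (X *ᵥ (L *ᵥ h)) = (h ᵥ* L) ⬝ᵥ (X *ᵥ (L *ᵥ h)) := by
        rw [← mulVec_transpose, hL.eq]
    _ = h ⬝ᵥ ((L * X * L) *ᵥ h) := by rw [← dotProduct_mulVec, mulVec_mulVec, mulVec_mulVec]
    _ = h ⬝ᵥ (L *ᵥ h) := by rw [hX]

theorem dotProduct_mulVec_eq_of_mulVec_eq_smul [Field R] {L X : Matrix ι ι R}
    (hL : L.IsSymm) (hX : L * X * L = L) {h u : ι → R} {c : R} (hc : c ≠ 0)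
    (hLh : L *ᵥ h = c • u) :
    u ⬝ᵥ (X *ᵥ u) = c⁻¹ * (h ⬝ᵥ u) := by
  have hu : u = c⁻¹ • (L *ᵥ h) := by rw [hLh, smul_smul, inv_mul_cancel₀ hc, one_smul]
  calc u ⬝ᵥ (X *ᵥ u) = c⁻¹ * c⁻¹ * ((L *ᵥ h) ⬝ᵥ (X *ᵥ (L *ᵥ h))) := by
        rw [hu, mulVec_smul, dotProduct_smul, smul_dotProduct, smul_eq_mul, smul_eq_mul]
        ring
    _ = c⁻¹ * c⁻¹ * (h ⬝ᵥ (L *ᵥ h)) := by rw [hL.mulVec_dotProduct_mulVec_mulVec hX]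
    _ = c⁻¹ * (h ⬝ᵥ u) := by
        rw [hLh, dotProduct_smul, smul_eq_mul]
        field_simp

end Matrix.IsSymm

variable [DecidableEq ι]

def laplacian [Ring R] (A : Matrix ι ι R) : Matrix ι ι R :=
  diagonal (fun i => ∑ k, A i k) - A

section Ring

variable [CommRing R] {A : Matrix ι ι R}

theorem laplacian_mulVec_apply (A : Matrix ι ι R) (h : ι → R) (i : ι) :
    (laplacian A *ᵥ h) i = ∑ k, A i k * (h i - h k) := by
  rw [laplacian, sub_mulVec, Pi.sub_apply, mulVec_diagonal]
  simp only [mulVec, dotProduct, mul_sub, sum_sub_distrib, sum_mul]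

theorem isSymm_laplacian (hA : A.IsSymm) : (laplacian A).IsSymm :=
  (isSymm_diagonal _).sub hA

theorem sum_laplacian_mulVec (hA : A.IsSymm) (h : ι → R) :
    ∑ i, (laplacian A *ᵥ h) i = 0 := by
  simp only [laplacian_mulVec_apply, mul_sub, sum_sub_distrib, sub_eq_zero]
  rw [sum_comm]
  exact sum_congr rfl fun i _ => sum_congr rfl fun k _ => by rw [hA.apply]

end Ring

section OrderedField

variable [Field R] [LinearOrder R] [IsStrictOrderedRing R] {A : Matrix ι ι R} {h : ι → R}

theorem laplacian_mulVec_apply_of_firstStep {i : ι} (hA : ∀ k, 0 ≤ A i k)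
    (hh : h i = 1 + ∑ k, A i k / (∑ l, A i l) * h k) :
    (laplacian A *ᵥ h) i = ∑ k, A i k := by
  rw [laplacian_mulVec_apply]
  by_cases hdeg : ∑ l, A i l = 0
  · have hrow : ∀ k, A i k = 0 := fun k =>
      (sum_eq_zero_iff_of_nonneg fun k _ => hA k).1 hdeg k (mem_univ k)
    simp [hrow]
  · have hmean : ∑ k, A i k * h k = (∑ l, A i l) * (h i - 1) := by
      rw [hh, add_sub_cancel_left, mul_sum]
      exact sum_congr rfl fun k _ => by field_simp
    simp only [mul_sub, sum_sub_distrib, ← sum_mul, hmean]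
    ring

theorem laplacian_mulVec_eq_of_firstStep (hsym : A.IsSymm) (hA : ∀ i k, 0 ≤ A i k) (j : ι)
    (hh : ∀ i, i ≠ j → h i = 1 + ∑ k, A i k / (∑ l, A i l) * h k) :
    laplacian A *ᵥ h = (fun i => ∑ k, A i k) - (∑ i, ∑ k, A i k) • Pi.single j 1 := by
  have hne : ∀ i, i ≠ j → (laplacian A *ᵥ h) i = ∑ k, A i k := fun i hi =>
    laplacian_mulVec_apply_of_firstStep (hA i) (hh i hi)
  ext i
  rcases eq_or_ne i j with rfl | hi
  · have hsum := sum_laplacian_mulVec hsym h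
    rw [← add_sum_erase _ _ (mem_univ i),
      sum_congr rfl fun k hk => hne k (ne_of_mem_erase hk)] at hsum
    rw [← add_sum_erase _ _ (mem_univ i)]
    simp only [Pi.sub_apply, Pi.smul_apply, Pi.single_eq_same, smul_eq_mul, mul_one]
    linear_combination hsum
  · simp [hne i hi, Pi.single_eq_of_ne hi]

end OrderedField

theorem walk_centrality_eq_quadratic_form_general
    (n : ℕ)
    (A : Matrix (Fin n) (Fin n) ℝ)
    (hsym : A.IsSymm)
    (hnonneg : ∀ i j, 0 ≤ A i j)
    (deg : Fin n → ℝ) (hdeg : ∀ i, deg i = ∑ j, A i j)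
    (d : ℝ) (hd : d = ∑ i, deg i)
    (pi' : Fin n → ℝ) (hpi : ∀ i, pi' i = deg i / d)
    (L : Matrix (Fin n) (Fin n) ℝ) (hL : L = Matrix.diagonal deg - A)
    (Ldag : Matrix (Fin n) (Fin n) ℝ)
    (hMP1 : L * Ldag * L = L)
    (H : Fin n → Fin n → ℝ)
    (hHdiag : ∀ j, H j j = 0)
    (hHrec : ∀ i j, i ≠ j → H i j = 1 + ∑ k, (A i k / deg i) * H k j)
    (Hc : Fin n → ℝ) (hHc : ∀ j, Hc j = ∑ i, pi' i * H i j)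
    (j : Fin n) :
    Hc j = d * ((Pi.single j 1 - pi') ⬝ᵥ (Ldag *ᵥ (Pi.single j 1 - pi'))) := by
  by_cases hd0 : d = 0
  · simp [hHc, hpi, hd0]
  obtain rfl : deg = fun i => ∑ k, A i k := funext hdeg
  obtain rfl : L = laplacian A := hL
  set h : Fin n → ℝ := fun i => H i j
  have hLh : laplacian A *ᵥ h = (-d) • (Pi.single j 1 - pi') := by
    rw [laplacian_mulVec_eq_of_firstStep (h := h) hsym hnonneg j fun i hi => hHrec i j hi, ← hd]
    ext i
    simp only [Pi.sub_apply, Pi.smul_apply, smul_eq_mul, hpi]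
    field_simp
    ring
  have hhu : h ⬝ᵥ (Pi.single j 1 - pi') = -Hc j := by
    rw [dotProduct_sub, dotProduct_single, dotProduct_comm, hHc]
    simp [h, hHdiag, dotProduct]
  rw [(isSymm_laplacian hsym).dotProduct_mulVec_eq_of_mulVec_eq_smul hMP1 (neg_ne_zero.2 hd0) hLh,
    hhu]
  field_simp

/-- For a connected weighted undirected graph with Laplacian `L = D - A`, the walk
centrality of any vertex `j` satisfies `H_j = d · (e_j − π)ᵀ L† (e_j − π)`, where `L†` is the
Moore–Penrose pseudoinverse of `L` (characterized by the four Penrose conditions), `e_j` is the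
`j`-th standard basis vector, and `H_j = Σ_i π_i H_{ij}` with hitting times `H i j` characterized
by their first-step recurrence. -/
theorem walk_centrality_eq_quadratic_form
    (n : ℕ) (hn : 0 < n)
    (A : Matrix (Fin n) (Fin n) ℝ)
    (hsym : A.IsSymm)
    (hnonneg : ∀ i j, 0 ≤ A i j)
    (hloop : ∀ i, A i i = 0)
    (hconn : ∀ i j : Fin n, ∃ k : ℕ, (A ^ k) i j ≠ 0)
    (deg : Fin n → ℝ) (hdeg : ∀ i, deg i = ∑ j, A i j)
    (d : ℝ) (hd : d = ∑ i, deg i)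
    (pi' : Fin n → ℝ) (hpi : ∀ i, pi' i = deg i / d)
    (L : Matrix (Fin n) (Fin n) ℝ) (hL : L = Matrix.diagonal deg - A)
    (Ldag : Matrix (Fin n) (Fin n) ℝ)
    (hMP1 : L * Ldag * L = L)
    (hMP2 : Ldag * L * Ldag = Ldag)
    (hMP3 : (L * Ldag)ᵀ = L * Ldag)
    (hMP4 : (Ldag * L)ᵀ = Ldag * L)
    (H : Fin n → Fin n → ℝ)
    (hHdiag : ∀ j, H j j = 0)
    (hHrec : ∀ i j, i ≠ j → H i j = 1 + ∑ k, (A i k / deg i) * H k j)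
    (Hc : Fin n → ℝ) (hHc : ∀ j, Hc j = ∑ i, pi' i * H i j)
    (j : Fin n) :
    Hc j = d * ((Pi.single j 1 - pi') ⬝ᵥ (Ldag *ᵥ (Pi.single j 1 - pi'))) :=
  walk_centrality_eq_quadratic_form_general n A hsym hnonneg deg hdeg d hd pi' hpi L hL Ldag hMP1 H
    hHdiag hHrec Hc hHc j
end

section
/- Let G=(V,E,w) be a connected weighted undirected graph and 0 < ε ≤ 1/2. Suppose Z is a k×n matrix satisfying (1−ε)C(u) ≤ ‖Z(e_u − π)‖² ≤ (1+ε)C(u) for every vertex u, and (1−ε)‖W^{1/2}B L†(e_u − e_v)‖² ≤ ‖Z(e_u − e_v)‖² ≤ (1+ε)‖W^{1/2}B L†(e_u − e_v)‖² for every pair of vertices u,v. Let z_i denote the i-th row of Z and let z̃_i be vectors satisfying ‖z_i − z̃_i‖_L ≤ δ‖z_i‖_L for all i ∈ {1,...,k}, where δ ≤ (ε/3)·((d − d_u)/d)·sqrt((1−ε) w_min / ((1+ε) n⁴ w_max)). Then for every vertex u ∈ V, (1−ε)² C(u) ≤ ‖Z̃(e_u − π)‖² ≤ (1+ε)² C(u),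 where Z̃ is the matrix with rows z̃_1,...,z̃_k. -/
open Matrix BigOperators Finset


private lemma sqrt_sum_sq_le_aux (k : ℕ) (f g : Fin k → ℝ) :
    Real.sqrt (∑ i, (f i) ^ 2) ≤ Real.sqrt (∑ i, (g i) ^ 2)
      + Real.sqrt (∑ i, (f i - g i) ^ 2) := by
  have hg : 0 ≤ ∑ i, (g i) ^ 2 := Finset.sum_nonneg fun i _ => sq_nonneg _
  have hh : 0 ≤ ∑ i, (f i - g i) ^ 2 := Finset.sum_nonneg fun i _ => sq_nonneg _
  have hcs : (∑ i, g i * (f i - g i)) ≤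
      Real.sqrt (∑ i, (g i) ^ 2) * Real.sqrt (∑ i, (f i - g i) ^ 2) := by
    have h1 := Finset.sum_mul_sq_le_sq_mul_sq Finset.univ g (fun i => f i - g i)
    calc (∑ i, g i * (f i - g i)) ≤ |∑ i, g i * (f i - g i)| := le_abs_self _
      _ = Real.sqrt ((∑ i, g i * (f i - g i)) ^ 2) := (Real.sqrt_sq_eq_abs _).symm
      _ ≤ Real.sqrt ((∑ i, (g i) ^ 2) * ∑ i, (f i - g i) ^ 2) := Real.sqrt_le_sqrt h1
      _ = _ := Real.sqrt_mul hg _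
  have key : (∑ i, (f i) ^ 2) ≤
      (Real.sqrt (∑ i, (g i) ^ 2) + Real.sqrt (∑ i, (f i - g i) ^ 2)) ^ 2 := by
    have hexp : (∑ i, (f i) ^ 2) =
        (∑ i, (g i) ^ 2) + 2 * (∑ i, g i * (f i - g i)) + ∑ i, (f i - g i) ^ 2 := by
      rw [Finset.mul_sum, ← Finset.sum_add_distrib, ← Finset.sum_add_distrib]
      exact Finset.sum_congr rfl fun i _ => by ring
    have hsg := Real.sq_sqrt hg
    have hsh := Real.sq_sqrt hh
    nlinarith [Real.sqrt_nonneg (∑ i, (g i) ^ 2), Real.sqrt_nonneg (∑ i, (f i - g i) ^ 2)]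
  calc Real.sqrt (∑ i, (f i) ^ 2) ≤
      Real.sqrt ((Real.sqrt (∑ i, (g i) ^ 2) + Real.sqrt (∑ i, (f i - g i) ^ 2)) ^ 2) :=
        Real.sqrt_le_sqrt key
    _ = _ := Real.sqrt_sq (by positivity)

set_option maxHeartbeats 2000000 in
/-- Let `G` be a connected weighted undirected graph with `0 < ε ≤ 1/2`.
Suppose the `k × n` matrix `Z` satisfies
`(1−ε)C(u) ≤ ‖Z(e_u − π)‖² ≤ (1+ε)C(u)` for every vertex `u` (where
`C(u) = (e_u − π)ᵀ L† (e_u − π)`), and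
`(1−ε)‖W^{1/2}BL†(e_u − e_v)‖² ≤ ‖Z(e_u − e_v)‖² ≤ (1+ε)‖W^{1/2}BL†(e_u − e_v)‖²`
for every pair of vertices `u, v`.  Let `z̃_i` approximate the rows `z_i` of `Z` by
`‖z_i − z̃_i‖_L ≤ δ‖z_i‖_L`, where
`δ ≤ (ε/3)·((d − d_u)/d)·√((1−ε) w_min / ((1+ε) n⁴ w_max))`.
Then for every vertex `u`, `(1−ε)² C(u) ≤ ‖Z̃(e_u − π)‖² ≤ (1+ε)² C(u)`. -/
theorem approx_rows_preserve_quadratic_form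
    (n m k : ℕ) (hn : 0 < n) (hm : 0 < m)
    (A : Matrix (Fin n) (Fin n) ℝ)
    (hsym : A.IsSymm)
    (hnonneg : ∀ i j, 0 ≤ A i j)
    (hloop : ∀ i, A i i = 0)
    (hconn : ∀ i j : Fin n, ∃ p : ℕ, (A ^ p) i j ≠ 0)
    (deg : Fin n → ℝ) (hdeg : ∀ i, deg i = ∑ j, A i j)
    (d : ℝ) (hd : d = ∑ i, deg i)
    (pi' : Fin n → ℝ) (hpi : ∀ i, pi' i = deg i / d)
    (L : Matrix (Fin n) (Fin n) ℝ) (hL : L = Matrix.diagonal deg - A)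
    (B : Matrix (Fin m) (Fin n) ℝ) (w : Fin m → ℝ)
    (hw : ∀ e, 0 < w e)
    (hB : ∀ e : Fin m, ∃ i j : Fin n, i ≠ j ∧ A i j ≠ 0 ∧
      (∀ v, B e v = (Pi.single i 1 - Pi.single j 1 : Fin n → ℝ) v))
    (hLBWB : L = Bᵀ * Matrix.diagonal w * B)
    (wmin wmax : ℝ)
    (hwminle : ∀ e, wmin ≤ w e) (hwminmem : ∃ e, w e = wmin)
    (hwmaxle : ∀ e, w e ≤ wmax) (hwmaxmem : ∃ e, w e = wmax)
    (Ldag : Matrix (Fin n) (Fin n) ℝ)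
    (hMP1 : L * Ldag * L = L)
    (hMP2 : Ldag * L * Ldag = Ldag)
    (hMP3 : (L * Ldag)ᵀ = L * Ldag)
    (hMP4 : (Ldag * L)ᵀ = Ldag * L)
    (ε : ℝ) (hε0 : 0 < ε) (hε : ε ≤ 1 / 2)
    (Z : Matrix (Fin k) (Fin n) ℝ)
    (hZpi : ∀ u : Fin n,
      (1 - ε) * ((Pi.single u 1 - pi') ⬝ᵥ (Ldag *ᵥ (Pi.single u 1 - pi')))
          ≤ ∑ i, ((Z *ᵥ (Pi.single u 1 - pi')) i) ^ 2 ∧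
      ∑ i, ((Z *ᵥ (Pi.single u 1 - pi')) i) ^ 2
          ≤ (1 + ε) * ((Pi.single u 1 - pi') ⬝ᵥ (Ldag *ᵥ (Pi.single u 1 - pi'))))
    (hZpair : ∀ u v : Fin n,
      (1 - ε) * (∑ e : Fin m,
          (Real.sqrt (w e) *
            ((B *ᵥ (Ldag *ᵥ (Pi.single u 1 - Pi.single v 1))) e)) ^ 2)
          ≤ ∑ i, ((Z *ᵥ (Pi.single u 1 - Pi.single v 1 : Fin n → ℝ)) i) ^ 2 ∧
      ∑ i, ((Z *ᵥ (Pi.single u 1 - Pi.single v 1 : Fin n → ℝ)) i) ^ 2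
          ≤ (1 + ε) * (∑ e : Fin m,
          (Real.sqrt (w e) *
            ((B *ᵥ (Ldag *ᵥ (Pi.single u 1 - Pi.single v 1))) e)) ^ 2))
    (δ : ℝ)
    (hδ : ∀ u : Fin n, δ ≤ (ε / 3) * ((d - deg u) / d) *
      Real.sqrt ((1 - ε) * wmin / ((1 + ε) * (n : ℝ) ^ 4 * wmax)))
    (zt : Fin k → Fin n → ℝ)
    (hzt : ∀ i : Fin k,
      Real.sqrt ((fun v => Z i v - zt i v) ⬝ᵥ (L *ᵥ fun v => Z i v - zt i v))
        ≤ δ * Real.sqrt ((fun v => Z i v) ⬝ᵥ (L *ᵥ fun v => Z i v))) :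
    ∀ u : Fin n,
      (1 - ε) ^ 2 * ((Pi.single u 1 - pi') ⬝ᵥ (Ldag *ᵥ (Pi.single u 1 - pi')))
          ≤ ∑ i, (zt i ⬝ᵥ (Pi.single u 1 - pi')) ^ 2 ∧
      ∑ i, (zt i ⬝ᵥ (Pi.single u 1 - pi')) ^ 2
          ≤ (1 + ε) ^ 2 * ((Pi.single u 1 - pi') ⬝ᵥ (Ldag *ᵥ (Pi.single u 1 - pi'))) := by
  -- ## generic dot-product / transpose helper
  have hdotT : ∀ (p q : ℕ) (M : Matrix (Fin p) (Fin q) ℝ) (a : Fin p → ℝ) (b : Fin q → ℝ),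
      a ⬝ᵥ (M *ᵥ b) = (Mᵀ *ᵥ a) ⬝ᵥ b := by
    intro p q M a b
    rw [Matrix.dotProduct_mulVec, ← Matrix.vecMul_transpose, Matrix.transpose_transpose]
  -- ## the bilinear form of L through edges
  have hbil : ∀ a b : Fin n → ℝ,
      a ⬝ᵥ (L *ᵥ b) = ∑ e, w e * ((B *ᵥ a) e * (B *ᵥ b) e) := by
    intro a b
    rw [hLBWB, ← Matrix.mulVec_mulVec, ← Matrix.mulVec_mulVec,
      hdotT _ _ Bᵀ a _, Matrix.transpose_transpose]
    simp only [dotProduct, Matrix.mulVec_diagonal]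
    exact Finset.sum_congr rfl fun e _ => by ring
  have hq : ∀ y : Fin n → ℝ, y ⬝ᵥ (L *ᵥ y) = ∑ e, w e * ((B *ᵥ y) e) ^ 2 := by
    intro y; rw [hbil]; exact Finset.sum_congr rfl fun e _ => by ring
  have hq0 : ∀ y : Fin n → ℝ, 0 ≤ y ⬝ᵥ (L *ᵥ y) := by
    intro y; rw [hq]
    exact Finset.sum_nonneg fun e _ => mul_nonneg (hw e).le (sq_nonneg _)
  have hzero_of_q : ∀ y : Fin n → ℝ, y ⬝ᵥ (L *ᵥ y) = 0 → ∀ e, (B *ᵥ y) e = 0 := by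
    intro y hy e
    rw [hq] at hy
    have h := (Finset.sum_eq_zero_iff_of_nonneg
      (fun e' (_ : e' ∈ Finset.univ) => mul_nonneg (hw e').le (sq_nonneg ((B *ᵥ y) e')))).mp
      hy e (Finset.mem_univ e)
    rcases mul_eq_zero.mp h with h1 | h1
    · exact absurd h1 (hw e).ne'
    · exact pow_eq_zero_iff (two_ne_zero) |>.mp h1
  have hCS : ∀ a b : Fin n → ℝ,
      (a ⬝ᵥ (L *ᵥ b)) ^ 2 ≤ (a ⬝ᵥ (L *ᵥ a)) * (b ⬝ᵥ (L *ᵥ b)) := by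
    intro a b
    have h := Finset.sum_mul_sq_le_sq_mul_sq Finset.univ
      (fun e => Real.sqrt (w e) * (B *ᵥ a) e) (fun e => Real.sqrt (w e) * (B *ᵥ b) e)
    have e1 : ∀ y z : Fin n → ℝ,
        (∑ e, (Real.sqrt (w e) * (B *ᵥ y) e) * (Real.sqrt (w e) * (B *ᵥ z) e))
          = y ⬝ᵥ (L *ᵥ z) := by
      intro y z; rw [hbil]
      refine Finset.sum_congr rfl fun e _ => ?_
      rw [show (Real.sqrt (w e) * (B *ᵥ y) e) * (Real.sqrt (w e) * (B *ᵥ z) e)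
          = (Real.sqrt (w e) * Real.sqrt (w e)) * ((B *ᵥ y) e * (B *ᵥ z) e) by ring,
        Real.mul_self_sqrt (hw e).le]
    have e2 : ∀ y : Fin n → ℝ,
        (∑ e, (Real.sqrt (w e) * (B *ᵥ y) e) ^ 2) = y ⬝ᵥ (L *ᵥ y) := by
      intro y; rw [← e1 y y]
      exact Finset.sum_congr rfl fun e _ => by rw [pow_two]
    rw [← e1 a b, ← e2 a, ← e2 b]
    exact h
  have hLsym : Lᵀ = L := by
    rw [hL, Matrix.transpose_sub, Matrix.diagonal_transpose, hsym]
  have hL1 : L *ᵥ (fun _ => (1 : ℝ)) = 0 := by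
    funext v
    simp only [Matrix.mulVec, dotProduct, mul_one, hL, Matrix.sub_apply,
      Finset.sum_sub_distrib, Pi.zero_apply]
    rw [Finset.sum_eq_single v (fun b _ hb => Matrix.diagonal_apply_ne deg (Ne.symm hb))
      (by simp), Matrix.diagonal_apply_eq, ← hdeg v, sub_self]
  have hsum1 : ∀ y : Fin n → ℝ, ∑ v, (L *ᵥ y) v = 0 := by
    intro y
    have h1 : ∑ v, (L *ᵥ y) v = ∑ j, (∑ v, L v j) * y j := by
      simp only [Matrix.mulVec, dotProduct, Finset.sum_mul]
      exact Finset.sum_comm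
    have h2 : ∀ j, (∑ v, L v j) = 0 := by
      intro j
      have h3 := congrFun hL1 j
      simp only [Matrix.mulVec, dotProduct, mul_one, Pi.zero_apply] at h3
      rw [← h3]
      exact Finset.sum_congr rfl fun v _ => by
        rw [← Matrix.transpose_apply L j v, hLsym]
    rw [h1]
    simp [h2]
  have hLentry : ∀ i j, L i j = ∑ e, B e i * w e * B e j := by
    intro i j
    rw [hLBWB, Matrix.mul_apply]
    refine Finset.sum_congr rfl fun e _ => ?_
    rw [Matrix.mul_diagonal, Matrix.transpose_apply]
  -- choose endpoints of each edge
  choose ie je hije hAije hBe using hB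
  have hBapply : ∀ e v, B e v = (if v = ie e then (1:ℝ) else 0) - (if v = je e then 1 else 0) := by
    intro e v; rw [hBe e v]; simp [Pi.single_apply]
  have hBdot : ∀ e (y : Fin n → ℝ), (B *ᵥ y) e = y (ie e) - y (je e) := by
    intro e y
    simp only [Matrix.mulVec, dotProduct]
    rw [Finset.sum_congr rfl (fun v _ => by rw [hBapply e v])]
    simp [sub_mul, ite_mul, Finset.sum_sub_distrib]
  have hedge : ∀ i j, A i j ≠ 0 → ∀ y : Fin n → ℝ, (∀ e, (B *ᵥ y) e = 0) → y i = y j := by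
    intro i j hA y hy
    have hij : i ≠ j := fun h => hA (h ▸ hloop i)
    have hLij : L i j ≠ 0 := by
      rw [hL]
      simpa [Matrix.sub_apply, Matrix.diagonal_apply_ne deg hij] using neg_ne_zero.mpr hA
    rw [hLentry] at hLij
    obtain ⟨e, _, hterm⟩ := Finset.exists_ne_zero_of_sum_ne_zero hLij
    have hBei : B e i ≠ 0 := fun h => hterm (by rw [h]; ring)
    have hBej : B e j ≠ 0 := fun h => hterm (by rw [h]; ring)
    have hmem : ∀ v : Fin n, B e v ≠ 0 → v = ie e ∨ v = je e := by
      intro v hv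
      by_contra hcon
      push_neg at hcon
      exact hv (by rw [hBapply]; simp [hcon.1, hcon.2])
    have h0 : y (ie e) = y (je e) := by
      have := hy e; rw [hBdot] at this; linarith
    rcases hmem i hBei with hi | hi <;> rcases hmem j hBej with hj | hj
    · exact absurd (hi.trans hj.symm) hij
    · rw [hi, hj]; exact h0
    · rw [hi, hj]; exact h0.symm
    · exact absurd (hi.trans hj.symm) hij
  have hker : ∀ y : Fin n → ℝ, L *ᵥ y = 0 → ∀ i j, y i = y j := by
    intro y hy
    have hqy : y ⬝ᵥ (L *ᵥ y) = 0 := by rw [hy]; simp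
    have hBy := hzero_of_q y hqy
    have hstep : ∀ i j, A i j ≠ 0 → y i = y j := fun i j hA => hedge i j hA y hBy
    have hpow : ∀ p (i j : Fin n), (A ^ p) i j ≠ 0 → y i = y j := by
      intro p
      induction p with
      | zero =>
        intro i j h
        by_cases hij : i = j
        · rw [hij]
        · simp [Matrix.one_apply, hij] at h
      | succ p ih =>
        intro i j h
        rw [pow_succ', Matrix.mul_apply] at h
        obtain ⟨l, _, hl⟩ := Finset.exists_ne_zero_of_sum_ne_zero h
        have h1 : A i l ≠ 0 := fun hc => hl (by rw [hc, zero_mul])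
        have h2 : (A ^ p) l j ≠ 0 := fun hc => hl (by rw [hc, mul_zero])
        exact (hstep i l h1).trans (ih l j h2)
    intro i j
    obtain ⟨p, hp⟩ := hconn i j
    exact hpow p i j hp
  have hproj : ∀ x : Fin n → ℝ, (∑ v, x v = 0) → L *ᵥ (Ldag *ᵥ x) = x := by
    intro x hx
    set r : Fin n → ℝ := x - (L * Ldag) *ᵥ x with hrdef
    have hPP : (L * Ldag) * (L * Ldag) = L * Ldag := by
      rw [← Matrix.mul_assoc, hMP1]
    have hPr : (L * Ldag) *ᵥ r = 0 := by
      rw [hrdef, Matrix.mulVec_sub, Matrix.mulVec_mulVec, hPP, sub_self]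
    have hrLv : ∀ v : Fin n → ℝ, r ⬝ᵥ (L *ᵥ v) = 0 := by
      intro v
      have h1 : L *ᵥ v = (L * Ldag) *ᵥ (L *ᵥ v) := by
        rw [Matrix.mulVec_mulVec, hMP1]
      rw [h1, hdotT _ _ (L * Ldag) r _, hMP3, hPr]
      simp
    have hBr : B *ᵥ r = 0 := funext (hzero_of_q r (hrLv r))
    have hLr : L *ᵥ r = 0 := by
      rw [hLBWB, ← Matrix.mulVec_mulVec, ← Matrix.mulVec_mulVec, hBr]
      simp
    have hconst := hker r hLr
    have hsumP : ∑ v, ((L * Ldag) *ᵥ x) v = 0 := by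
      have h2 : (L * Ldag) *ᵥ x = L *ᵥ (Ldag *ᵥ x) := (Matrix.mulVec_mulVec _ _ _).symm
      rw [h2]; exact hsum1 _
    have hsumr : ∑ v, r v = 0 := by
      simp only [hrdef, Pi.sub_apply, Finset.sum_sub_distrib, hx, hsumP, sub_self]
    have hr0 : ∀ v, r v = 0 := by
      intro v
      have hall : ∑ v', r v' = (n : ℝ) * r v := by
        rw [Finset.sum_congr rfl fun v' _ => hconst v' v]
        simp [Finset.card_univ, mul_comm]
      have hn' : (0 : ℝ) < n := by exact_mod_cast hn
      have := hall ▸ hsumr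
      rcases mul_eq_zero.mp this with h | h
      · exact absurd h hn'.ne'
      · exact h
    have hfix : (L * Ldag) *ᵥ x = x := by
      funext v
      have := hr0 v
      simp only [hrdef, Pi.sub_apply] at this
      linarith
    rw [Matrix.mulVec_mulVec]
    exact hfix
  -- ## trace bound
  have hPP' : (Ldag * L) * (Ldag * L) = Ldag * L := by
    rw [← Matrix.mul_assoc, hMP2]
  have hsymP : ∀ a b, (Ldag * L) a b = (Ldag * L) b a := by
    intro a b
    have h := Matrix.transpose_apply (Ldag * L) a b
    rw [hMP4] at h
    exact h
  have hdiag1 : ∀ v, (Ldag * L) v v ≤ 1 := by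
    intro v
    have hvv : (Ldag * L) v v = ∑ v', ((Ldag * L) v v') ^ 2 := by
      conv_lhs => rw [← hPP']
      rw [Matrix.mul_apply]
      exact Finset.sum_congr rfl fun v' _ => by rw [hsymP v' v, pow_two]
    have hterm : ((Ldag * L) v v) ^ 2 ≤ ∑ v', ((Ldag * L) v v') ^ 2 :=
      Finset.single_le_sum (fun v' (_ : v' ∈ Finset.univ) => sq_nonneg ((Ldag * L) v v'))
        (Finset.mem_univ v)
    have h0 : 0 ≤ (Ldag * L) v v := by
      rw [hvv]; exact Finset.sum_nonneg fun _ _ => sq_nonneg _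
    nlinarith [hvv ▸ hterm]
  have htrace : ∑ v, (Ldag * L) v v ≤ (n : ℝ) := by
    calc ∑ v, (Ldag * L) v v ≤ ∑ _v : Fin n, (1 : ℝ) :=
        Finset.sum_le_sum fun v _ => hdiag1 v
      _ = n := by simp
  -- ## per-edge resistances
  have hchis : ∀ e, ∑ v, (Pi.single (ie e) 1 - Pi.single (je e) 1 : Fin n → ℝ) v = 0 := by
    intro e
    simp [Pi.sub_apply, Finset.sum_sub_distrib, Pi.single_apply]
  have hRe : ∀ e, (∑ e', (Real.sqrt (w e') *
        ((B *ᵥ (Ldag *ᵥ (Pi.single (ie e) 1 - Pi.single (je e) 1))) e')) ^ 2)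
      = (Ldag *ᵥ (Pi.single (ie e) 1 - Pi.single (je e) 1))
          ⬝ᵥ (Pi.single (ie e) 1 - Pi.single (je e) 1) := by
    intro e
    have h1 : (∑ e', (Real.sqrt (w e') *
        ((B *ᵥ (Ldag *ᵥ (Pi.single (ie e) 1 - Pi.single (je e) 1))) e')) ^ 2)
        = (Ldag *ᵥ (Pi.single (ie e) 1 - Pi.single (je e) 1))
            ⬝ᵥ (L *ᵥ (Ldag *ᵥ (Pi.single (ie e) 1 - Pi.single (je e) 1))) := by
      rw [hq]
      exact Finset.sum_congr rfl fun e' _ => by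
        rw [mul_pow, Real.sq_sqrt (hw e').le]
    rw [h1, hproj _ (hchis e)]
  have hwRe : ∑ e, w e * ((Ldag *ᵥ (Pi.single (ie e) 1 - Pi.single (je e) 1))
        ⬝ᵥ (Pi.single (ie e) 1 - Pi.single (je e) 1))
      = ∑ v, (Ldag * L) v v := by
    have lhs_eq : ∀ e, w e * ((Ldag *ᵥ (Pi.single (ie e) 1 - Pi.single (je e) 1))
          ⬝ᵥ (Pi.single (ie e) 1 - Pi.single (je e) 1))
        = ∑ v, ∑ v', Ldag v v' * (B e v' * (w e * B e v)) := by
      intro e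
      simp only [dotProduct, Matrix.mulVec, Finset.mul_sum, Finset.sum_mul]
      refine Finset.sum_congr rfl fun v _ => ?_
      refine Finset.sum_congr rfl fun v' _ => ?_
      rw [← hBe e v', ← hBe e v]
      ring
    calc ∑ e, w e * ((Ldag *ᵥ (Pi.single (ie e) 1 - Pi.single (je e) 1))
          ⬝ᵥ (Pi.single (ie e) 1 - Pi.single (je e) 1))
        = ∑ e, ∑ v, ∑ v', Ldag v v' * (B e v' * (w e * B e v)) :=
          Finset.sum_congr rfl fun e _ => lhs_eq e
      _ = ∑ v, ∑ e, ∑ v', Ldag v v' * (B e v' * (w e * B e v)) := Finset.sum_comm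
      _ = ∑ v, ∑ v', ∑ e, Ldag v v' * (B e v' * (w e * B e v)) :=
          Finset.sum_congr rfl fun v _ => Finset.sum_comm
      _ = ∑ v, (Ldag * L) v v := by
          refine Finset.sum_congr rfl fun v _ => ?_
          rw [Matrix.mul_apply]
          refine Finset.sum_congr rfl fun v' _ => ?_
          rw [hLentry v' v, Finset.mul_sum]
          exact Finset.sum_congr rfl fun e _ => by ring
  -- ## total energy bound
  have hT : ∑ i, (fun v => Z i v) ⬝ᵥ (L *ᵥ fun v => Z i v) ≤ (1 + ε) * n := by
    calc ∑ i, (fun v => Z i v) ⬝ᵥ (L *ᵥ fun v => Z i v)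
        = ∑ i, ∑ e, w e * ((B *ᵥ fun v => Z i v) e) ^ 2 :=
          Finset.sum_congr rfl fun i _ => hq _
      _ = ∑ e, w e * ∑ i, ((B *ᵥ fun v => Z i v) e) ^ 2 := by
          rw [Finset.sum_comm]
          exact Finset.sum_congr rfl fun e _ => (Finset.mul_sum _ _ _).symm
      _ = ∑ e, w e * ∑ i, ((Z *ᵥ (Pi.single (ie e) 1 - Pi.single (je e) 1 : Fin n → ℝ)) i) ^ 2 := by
          refine Finset.sum_congr rfl fun e _ => ?_
          congr 1
          refine Finset.sum_congr rfl fun i _ => ?_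
          congr 1
          simp only [Matrix.mulVec, dotProduct]
          refine Finset.sum_congr rfl fun v _ => ?_
          rw [← hBe e v]
          ring
      _ ≤ ∑ e, w e * ((1 + ε) * (∑ e', (Real.sqrt (w e') *
            ((B *ᵥ (Ldag *ᵥ (Pi.single (ie e) 1 - Pi.single (je e) 1))) e')) ^ 2)) :=
          Finset.sum_le_sum fun e _ =>
            mul_le_mul_of_nonneg_left (hZpair (ie e) (je e)).2 (hw e).le
      _ = (1 + ε) * ∑ e, w e * (∑ e', (Real.sqrt (w e') *
            ((B *ᵥ (Ldag *ᵥ (Pi.single (ie e) 1 - Pi.single (je e) 1))) e')) ^ 2) := by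
          rw [Finset.mul_sum]
          exact Finset.sum_congr rfl fun e _ => by ring
      _ = (1 + ε) * ∑ v, (Ldag * L) v v := by
          rw [← hwRe]
          exact congrArg _ (Finset.sum_congr rfl fun e _ => by rw [hRe e])
      _ ≤ (1 + ε) * n := by
          have h1ε : (0:ℝ) ≤ 1 + ε := by linarith
          exact mul_le_mul_of_nonneg_left htrace h1ε
  -- ## basic positivity facts
  have hdegnn : ∀ i, 0 ≤ deg i := fun i =>
    (hdeg i) ▸ Finset.sum_nonneg fun j _ => hnonneg i j
  have hdegd : ∀ i, deg i ≤ d := fun i =>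
    hd ▸ Finset.single_le_sum (fun i' (_ : i' ∈ Finset.univ) => hdegnn i') (Finset.mem_univ i)
  have hd0 : 0 < d := by
    have e0 : Fin m := ⟨0, hm⟩
    have h1 : 0 < A (ie e0) (je e0) := lt_of_le_of_ne (hnonneg _ _) (Ne.symm (hAije e0))
    have h2 : 0 < deg (ie e0) := by
      rw [hdeg]
      exact lt_of_lt_of_le h1
        (Finset.single_le_sum (fun j (_ : j ∈ Finset.univ) => hnonneg (ie e0) j)
          (Finset.mem_univ (je e0)))
    rw [hd]
    exact lt_of_lt_of_le h2
      (Finset.single_le_sum (fun i (_ : i ∈ Finset.univ) => hdegnn i) (Finset.mem_univ (ie e0)))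
  have hwmax0 : 0 < wmax := by
    obtain ⟨e, he⟩ := hwmaxmem
    exact he ▸ hw e
  have hwminmax : wmin ≤ wmax := by
    obtain ⟨e, he⟩ := hwmaxmem
    exact he ▸ hwminle e
  have h1ε : (0:ℝ) < 1 + ε := by linarith
  have hε1 : (0:ℝ) ≤ 1 - ε := by linarith
  have hn' : (0:ℝ) < n := by exact_mod_cast hn
  have hn1 : (1:ℝ) ≤ n := by exact_mod_cast hn
  -- ## bound on δ₊
  set δp := max δ 0 with hδpdef
  have hδp0 : 0 ≤ δp := le_max_right δ 0
  have hδp_le : δp ≤ (ε / 3) * Real.sqrt ((1 - ε) / ((1 + ε) * (n:ℝ) ^ 4)) := by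
    have u0 : Fin n := ⟨0, hn⟩
    have hden : (0:ℝ) < (1 + ε) * (n:ℝ) ^ 4 := by
      apply mul_pos h1ε
      positivity
    have hfrac1 : (d - deg u0) / d ≤ 1 := by
      rw [div_le_one hd0]
      linarith [hdegnn u0]
    have hfrac0 : 0 ≤ (d - deg u0) / d :=
      div_nonneg (by linarith [hdegd u0]) hd0.le
    have hsq : Real.sqrt ((1 - ε) * wmin / ((1 + ε) * (n:ℝ) ^ 4 * wmax))
        ≤ Real.sqrt ((1 - ε) / ((1 + ε) * (n:ℝ) ^ 4)) := by
      apply Real.sqrt_le_sqrt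
      rw [div_le_div_iff₀ (mul_pos hden hwmax0) hden]
      nlinarith [mul_nonneg hε1 hden.le, hw ⟨0, hm⟩, hwminle ⟨0, hm⟩]
    apply max_le _ (by positivity)
    calc δ ≤ (ε / 3) * ((d - deg u0) / d) *
          Real.sqrt ((1 - ε) * wmin / ((1 + ε) * (n:ℝ) ^ 4 * wmax)) := hδ u0
      _ ≤ (ε / 3) * 1 * Real.sqrt ((1 - ε) * wmin / ((1 + ε) * (n:ℝ) ^ 4 * wmax)) := by
          apply mul_le_mul_of_nonneg_right _ (Real.sqrt_nonneg _)
          apply mul_le_mul_of_nonneg_left hfrac1 (by linarith)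
      _ = (ε / 3) * Real.sqrt ((1 - ε) * wmin / ((1 + ε) * (n:ℝ) ^ 4 * wmax)) := by ring
      _ ≤ (ε / 3) * Real.sqrt ((1 - ε) / ((1 + ε) * (n:ℝ) ^ 4)) :=
          mul_le_mul_of_nonneg_left hsq (by linarith)
  have hkey : δp ^ 2 * ((1 + ε) * (n:ℝ)) ≤ (ε / 3) ^ 2 * (1 - ε) := by
    have hden : (0:ℝ) < (1 + ε) * (n:ℝ) ^ 4 := by
      apply mul_pos h1ε
      positivity
    have h2 : δp ^ 2 ≤ (ε / 3) ^ 2 * ((1 - ε) / ((1 + ε) * (n:ℝ) ^ 4)) := by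
      calc δp ^ 2 ≤ ((ε / 3) * Real.sqrt ((1 - ε) / ((1 + ε) * (n:ℝ) ^ 4))) ^ 2 :=
            pow_le_pow_left₀ hδp0 hδp_le 2
        _ = (ε / 3) ^ 2 * ((1 - ε) / ((1 + ε) * (n:ℝ) ^ 4)) := by
            rw [mul_pow, Real.sq_sqrt (div_nonneg hε1 hden.le)]
    have h3 : (1 + ε) * (n:ℝ) ≤ (1 + ε) * (n:ℝ) ^ 4 := by
      have h4 : (n:ℝ) ≤ (n:ℝ) ^ 4 := by
        nlinarith [hn1, sq_nonneg ((n:ℝ) - 1), sq_nonneg (n:ℝ)]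
      nlinarith
    calc δp ^ 2 * ((1 + ε) * (n:ℝ)) ≤ δp ^ 2 * ((1 + ε) * (n:ℝ) ^ 4) :=
          mul_le_mul_of_nonneg_left h3 (sq_nonneg _)
      _ ≤ ((ε / 3) ^ 2 * ((1 - ε) / ((1 + ε) * (n:ℝ) ^ 4))) * ((1 + ε) * (n:ℝ) ^ 4) :=
          mul_le_mul_of_nonneg_right h2 hden.le
      _ = (ε / 3) ^ 2 * (1 - ε) := by
          rw [mul_assoc, div_mul_cancel₀ _ hden.ne']
  -- ## main argument, per vertex
  intro u
  have hsum_pi : ∑ v, pi' v = 1 := by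
    have : ∑ v, pi' v = (∑ v, deg v) / d := by
      rw [Finset.sum_div]
      exact Finset.sum_congr rfl fun v _ => hpi v
    rw [this, ← hd, div_self hd0.ne']
  have hxsum : ∑ v, (Pi.single u 1 - pi' : Fin n → ℝ) v = 0 := by
    simp only [Pi.sub_apply, Finset.sum_sub_distrib, hsum_pi]
    simp [Pi.single_apply]
  set x : Fin n → ℝ := Pi.single u 1 - pi' with hxdef
  set g : Fin n → ℝ := Ldag *ᵥ x with hgdef
  have hxg : L *ᵥ g = x := hproj x hxsum
  set C : ℝ := x ⬝ᵥ (Ldag *ᵥ x) with hCdef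
  have hCg : C = x ⬝ᵥ g := by rw [hCdef, hgdef]
  have hCq : C = g ⬝ᵥ (L *ᵥ g) := by
    rw [hCg, dotProduct_comm, ← hxg]
  have hC0 : 0 ≤ C := hCq ▸ hq0 g
  have hS := hZpi u
  -- error bound per row
  have herr : ∀ i, ((Z *ᵥ x) i - zt i ⬝ᵥ x) ^ 2
      ≤ (δp ^ 2 * ((fun v => Z i v) ⬝ᵥ (L *ᵥ fun v => Z i v))) * C := by
    intro i
    have h1 : (Z *ᵥ x) i - zt i ⬝ᵥ x = (fun v => Z i v - zt i v) ⬝ᵥ x := by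
      simp [Matrix.mulVec, dotProduct, sub_mul, Finset.sum_sub_distrib]
    rw [h1, ← hxg]
    have h3 := hCS (fun v => Z i v - zt i v) g
    have hf0 : 0 ≤ (fun v => Z i v - zt i v) ⬝ᵥ (L *ᵥ fun v => Z i v - zt i v) := hq0 _
    have hZ0 : 0 ≤ (fun v => Z i v) ⬝ᵥ (L *ᵥ fun v => Z i v) := hq0 _
    have h4 : Real.sqrt ((fun v => Z i v - zt i v) ⬝ᵥ (L *ᵥ fun v => Z i v - zt i v))
        ≤ δp * Real.sqrt ((fun v => Z i v) ⬝ᵥ (L *ᵥ fun v => Z i v)) :=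
      (hzt i).trans (mul_le_mul_of_nonneg_right (le_max_left δ 0) (Real.sqrt_nonneg _))
    have h5 : (fun v => Z i v - zt i v) ⬝ᵥ (L *ᵥ fun v => Z i v - zt i v)
        ≤ δp ^ 2 * ((fun v => Z i v) ⬝ᵥ (L *ᵥ fun v => Z i v)) := by
      have h6 := pow_le_pow_left₀ (Real.sqrt_nonneg _) h4 2
      rwa [Real.sq_sqrt hf0, mul_pow, Real.sq_sqrt hZ0] at h6
    calc ((fun v => Z i v - zt i v) ⬝ᵥ (L *ᵥ g)) ^ 2
        ≤ ((fun v => Z i v - zt i v) ⬝ᵥ (L *ᵥ fun v => Z i v - zt i v)) * (g ⬝ᵥ (L *ᵥ g)) := h3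
      _ = ((fun v => Z i v - zt i v) ⬝ᵥ (L *ᵥ fun v => Z i v - zt i v)) * C := by rw [← hCq]
      _ ≤ (δp ^ 2 * ((fun v => Z i v) ⬝ᵥ (L *ᵥ fun v => Z i v))) * C :=
          mul_le_mul_of_nonneg_right h5 hC0
  have hE2 : ∑ i, ((Z *ᵥ x) i - zt i ⬝ᵥ x) ^ 2 ≤ (ε / 3) ^ 2 * (1 - ε) * C := by
    calc ∑ i, ((Z *ᵥ x) i - zt i ⬝ᵥ x) ^ 2
        ≤ ∑ i, (δp ^ 2 * ((fun v => Z i v) ⬝ᵥ (L *ᵥ fun v => Z i v))) * C :=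
          Finset.sum_le_sum fun i _ => herr i
      _ = δp ^ 2 * (∑ i, (fun v => Z i v) ⬝ᵥ (L *ᵥ fun v => Z i v)) * C := by
          rw [← Finset.sum_mul, Finset.mul_sum]
      _ ≤ δp ^ 2 * ((1 + ε) * n) * C := by
          apply mul_le_mul_of_nonneg_right _ hC0
          exact mul_le_mul_of_nonneg_left hT (sq_nonneg _)
      _ ≤ (ε / 3) ^ 2 * (1 - ε) * C := mul_le_mul_of_nonneg_right hkey hC0
  -- sqrt endgame
  have hS2nn : 0 ≤ ∑ i, ((Z *ᵥ x) i) ^ 2 := Finset.sum_nonneg fun i _ => sq_nonneg _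
  have hT2nn : 0 ≤ ∑ i, (zt i ⬝ᵥ x) ^ 2 := Finset.sum_nonneg fun i _ => sq_nonneg _
  have hE2nn : 0 ≤ ∑ i, ((Z *ᵥ x) i - zt i ⬝ᵥ x) ^ 2 := Finset.sum_nonneg fun i _ => sq_nonneg _
  have htri1 : Real.sqrt (∑ i, (zt i ⬝ᵥ x) ^ 2)
      ≤ Real.sqrt (∑ i, ((Z *ᵥ x) i) ^ 2)
        + Real.sqrt (∑ i, ((Z *ᵥ x) i - zt i ⬝ᵥ x) ^ 2) := by
    have h := sqrt_sum_sq_le_aux k (fun i => zt i ⬝ᵥ x) (fun i => (Z *ᵥ x) i)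
    have hre : ∑ i, (zt i ⬝ᵥ x - (Z *ᵥ x) i) ^ 2 = ∑ i, ((Z *ᵥ x) i - zt i ⬝ᵥ x) ^ 2 :=
      Finset.sum_congr rfl fun i _ => by ring
    rwa [hre] at h
  have htri2 : Real.sqrt (∑ i, ((Z *ᵥ x) i) ^ 2)
      ≤ Real.sqrt (∑ i, (zt i ⬝ᵥ x) ^ 2)
        + Real.sqrt (∑ i, ((Z *ᵥ x) i - zt i ⬝ᵥ x) ^ 2) :=
    sqrt_sum_sq_le_aux k (fun i => (Z *ᵥ x) i) (fun i => zt i ⬝ᵥ x)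
  have hsqS_up : Real.sqrt (∑ i, ((Z *ᵥ x) i) ^ 2) ≤ Real.sqrt (1 + ε) * Real.sqrt C := by
    rw [← Real.sqrt_mul h1ε.le]
    exact Real.sqrt_le_sqrt hS.2
  have hsqS_lo : Real.sqrt (1 - ε) * Real.sqrt C ≤ Real.sqrt (∑ i, ((Z *ᵥ x) i) ^ 2) := by
    rw [← Real.sqrt_mul hε1]
    exact Real.sqrt_le_sqrt hS.1
  have hsqE : Real.sqrt (∑ i, ((Z *ᵥ x) i - zt i ⬝ᵥ x) ^ 2)
      ≤ (ε / 3) * Real.sqrt (1 - ε) * Real.sqrt C := by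
    have heq : (ε / 3) ^ 2 * (1 - ε) * C
        = ((ε / 3) * Real.sqrt (1 - ε) * Real.sqrt C) ^ 2 := by
      rw [mul_pow, mul_pow, Real.sq_sqrt hε1, Real.sq_sqrt hC0]
    calc Real.sqrt (∑ i, ((Z *ᵥ x) i - zt i ⬝ᵥ x) ^ 2)
        ≤ Real.sqrt ((ε / 3) ^ 2 * (1 - ε) * C) := Real.sqrt_le_sqrt hE2
      _ = (ε / 3) * Real.sqrt (1 - ε) * Real.sqrt C := by
          rw [heq, Real.sqrt_sq (by positivity)]
  have hu2 : Real.sqrt (1 - ε) ^ 2 = 1 - ε := Real.sq_sqrt hε1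
  have hv2 : Real.sqrt (1 + ε) ^ 2 = 1 + ε := Real.sq_sqrt h1ε.le
  have hu0 : 0 ≤ Real.sqrt (1 - ε) := Real.sqrt_nonneg _
  have hv0 : 0 ≤ Real.sqrt (1 + ε) := Real.sqrt_nonneg _
  have hu1 : Real.sqrt (1 - ε) ≤ 1 := by nlinarith
  have hv1 : 1 ≤ Real.sqrt (1 + ε) := by nlinarith
  have hkey_up : Real.sqrt (1 + ε) + (ε / 3) * Real.sqrt (1 - ε) ≤ 1 + ε := by
    nlinarith [sq_nonneg (Real.sqrt (1 + ε) - 1)]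
  have hkey_lo : 1 - ε ≤ Real.sqrt (1 - ε) * (1 - ε / 3) := by
    have hle : Real.sqrt (1 - ε) ≤ 1 - ε / 3 := by nlinarith
    nlinarith
  have hup : Real.sqrt (∑ i, (zt i ⬝ᵥ x) ^ 2) ≤ (1 + ε) * Real.sqrt C := by
    have hsC := Real.sqrt_nonneg C
    calc Real.sqrt (∑ i, (zt i ⬝ᵥ x) ^ 2)
        ≤ Real.sqrt (∑ i, ((Z *ᵥ x) i) ^ 2)
          + Real.sqrt (∑ i, ((Z *ᵥ x) i - zt i ⬝ᵥ x) ^ 2) := htri1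
      _ ≤ Real.sqrt (1 + ε) * Real.sqrt C + (ε / 3) * Real.sqrt (1 - ε) * Real.sqrt C :=
          add_le_add hsqS_up hsqE
      _ = (Real.sqrt (1 + ε) + (ε / 3) * Real.sqrt (1 - ε)) * Real.sqrt C := by ring
      _ ≤ (1 + ε) * Real.sqrt C := mul_le_mul_of_nonneg_right hkey_up hsC
  have hlo : (1 - ε) * Real.sqrt C ≤ Real.sqrt (∑ i, (zt i ⬝ᵥ x) ^ 2) := by
    have hsC := Real.sqrt_nonneg C
    have h1 : Real.sqrt (1 - ε) * Real.sqrt C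
        ≤ Real.sqrt (∑ i, (zt i ⬝ᵥ x) ^ 2) + (ε / 3) * Real.sqrt (1 - ε) * Real.sqrt C :=
      hsqS_lo.trans (htri2.trans (by linarith [hsqE]))
    have h2 : (1 - ε) * Real.sqrt C ≤ (Real.sqrt (1 - ε) * (1 - ε / 3)) * Real.sqrt C :=
      mul_le_mul_of_nonneg_right hkey_lo hsC
    nlinarith
  constructor
  · have h1 : 0 ≤ (1 - ε) * Real.sqrt C := mul_nonneg hε1 (Real.sqrt_nonneg C)
    have h2 := pow_le_pow_left₀ h1 hlo 2
    rw [Real.sq_sqrt hT2nn] at h2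
    calc (1 - ε) ^ 2 * C = ((1 - ε) * Real.sqrt C) ^ 2 := by
          rw [mul_pow, Real.sq_sqrt hC0]
      _ ≤ ∑ i, (zt i ⬝ᵥ x) ^ 2 := h2
  · have h2 := pow_le_pow_left₀ (Real.sqrt_nonneg _) hup 2
    rw [Real.sq_sqrt hT2nn] at h2
    calc ∑ i, (zt i ⬝ᵥ x) ^ 2 ≤ ((1 + ε) * Real.sqrt C) ^ 2 := h2
      _ = (1 + ε) ^ 2 * C := by rw [mul_pow, Real.sq_sqrt hC0]
end

section
/- Let G=(V,E,w) be a connected weighted undirected graph and S a nonempty proper subset of its vertex set. Then the group walk centrality satisfies H(S) = π_{−S}^T (L_{−S})^{−1} d_{−S}, where L_{−S} is the submatrix of the Laplacian L obtained by deleting the rows and columns indexed by S, and π_{−S}, d_{−S} are the corresponding subvectors of the stationary distribution and the degree vector. -/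
open Matrix BigOperators Finset

/-- For a connected weighted undirected graph and a nonempty proper subset `S` of
vertices, the group walk centrality `H(S) = Σ_i π_i H_{iS}` satisfies
`H(S) = π_{−S}ᵀ (L_{−S})⁻¹ d_{−S}`, where `L_{−S}` is the submatrix of the Laplacian obtained by
deleting the rows and columns indexed by `S`, and `π_{−S}`, `d_{−S}` are the corresponding
subvectors of the stationary distribution and degree vector.  Group hitting times `HS i = H_{iS}`
are characterized by `HS i = 0` for `i ∈ S` and the first-step recurrence otherwise. -/
theorem group_walk_centrality_formula
    (n : ℕ) (hn : 0 < n)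
    (A : Matrix (Fin n) (Fin n) ℝ)
    (hsym : A.IsSymm)
    (hnonneg : ∀ i j, 0 ≤ A i j)
    (hloop : ∀ i, A i i = 0)
    (hconn : ∀ i j : Fin n, ∃ k : ℕ, (A ^ k) i j ≠ 0)
    (deg : Fin n → ℝ) (hdeg : ∀ i, deg i = ∑ j, A i j)
    (d : ℝ) (hd : d = ∑ i, deg i)
    (pi' : Fin n → ℝ) (hpi : ∀ i, pi' i = deg i / d)
    (L : Matrix (Fin n) (Fin n) ℝ) (hL : L = Matrix.diagonal deg - A)
    (S : Finset (Fin n)) (hS : S.Nonempty) (hSproper : S ≠ Finset.univ)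
    (HS : Fin n → ℝ)
    (hHS0 : ∀ i ∈ S, HS i = 0)
    (hHSrec : ∀ i, i ∉ S → HS i = 1 + ∑ k, (A i k / deg i) * HS k) :
    ∑ i, pi' i * HS i
      = ∑ a : {i : Fin n // i ∉ S}, ∑ b : {i : Fin n // i ∉ S},
          pi' a.1 *
            ((L.submatrix (fun a : {i : Fin n // i ∉ S} => (a : Fin n))
                (fun b : {i : Fin n // i ∉ S} => (b : Fin n)))⁻¹ a b) *
            deg b.1 := by
  classical
  have hAsymm : ∀ i j, A i j = A j i := by
    intro i j
    have := congrFun (congrFun hsym j) i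
    simpa [Matrix.transpose_apply] using this
  -- subtype sums
  have hsum_sub : ∀ f : Fin n → ℝ, (∀ i ∈ S, f i = 0) →
      ∑ i, f i = ∑ a : {i : Fin n // i ∉ S}, f a.1 := by
    intro f hf
    rw [← Finset.sum_subtype (Sᶜ) (fun x => Finset.mem_compl) f]
    exact (Finset.sum_subset (Finset.subset_univ _)
      (fun x _ hx => hf x (by simpa using hx))).symm
  -- the recurrence in cleared form
  have hrec : ∀ i ∉ S, deg i * HS i = deg i + ∑ k, A i k * HS k := by
    intro i hi
    by_cases h0 : deg i = 0
    · have hA0 : ∀ j, A i j = 0 := by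
        intro j
        have := (Finset.sum_eq_zero_iff_of_nonneg
          (fun j _ => hnonneg i j)).mp ((hdeg i).symm.trans h0)
        exact this j (Finset.mem_univ j)
      simp [h0, hA0]
    · have := hHSrec i hi
      have h2 : deg i * HS i = deg i * (1 + ∑ k, A i k / deg i * HS k) := by rw [← this]
      rw [h2, mul_add, mul_one, Finset.mul_sum]
      congr 1
      apply Finset.sum_congr rfl
      intro k _
      field_simp
  set B : Matrix {i : Fin n // i ∉ S} {i : Fin n // i ∉ S} ℝ :=
    L.submatrix (fun a : {i : Fin n // i ∉ S} => (a : Fin n))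
      (fun b : {i : Fin n // i ∉ S} => (b : Fin n)) with hB
  -- key equation : B *ᵥ (HS ∘ val) = deg ∘ val
  have hkey : B *ᵥ (fun a : {i : Fin n // i ∉ S} => HS a.1)
      = fun a : {i : Fin n // i ∉ S} => deg a.1 := by
    funext a
    have h1 : ∀ j : Fin n, (fun j => L a.1 j * HS j) j = 0 → True := fun _ _ => trivial
    have : (B *ᵥ fun a : {i : Fin n // i ∉ S} => HS a.1) a
        = ∑ b : {i : Fin n // i ∉ S}, L a.1 b.1 * HS b.1 := by
      simp [Matrix.mulVec, dotProduct, hB]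
    rw [this, ← hsum_sub (fun j => L a.1 j * HS j) (fun j hj => by simp [hHS0 j hj])]
    have hdiag : ∑ j, Matrix.diagonal deg a.1 j * HS j = deg a.1 * HS a.1 := by
      simp [Matrix.diagonal_apply, ite_mul, Finset.sum_ite_eq]
    have : ∑ j, L a.1 j * HS j
        = deg a.1 * HS a.1 - ∑ j, A a.1 j * HS j := by
      simp only [hL, Matrix.sub_apply, sub_mul, Finset.sum_sub_distrib, hdiag]
    rw [this, hrec a.1 a.2]
    ring
  -- invertibility of B
  have hdet : B.det ≠ 0 := by
    intro h0
    obtain ⟨v, hv, hBv⟩ := (Matrix.exists_mulVec_eq_zero_iff).mpr h0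
    set x : Fin n → ℝ := fun i => if h : i ∉ S then v ⟨i, h⟩ else 0 with hx
    have hxS : ∀ i ∈ S, x i = 0 := by intro i hi; simp [hx, hi]
    -- quadratic form is zero
    have hQ0 : ∑ i, ∑ j, x i * L i j * x j = 0 := by
      have e1 : ∀ i, ∑ j, x i * L i j * x j
          = ∑ b : {i : Fin n // i ∉ S}, x i * L i b.1 * x b.1 := by
        intro i
        exact hsum_sub (fun j => x i * L i j * x j)
          (fun j hj => by simp [hxS j hj])
      have e2 : ∑ i, ∑ j, x i * L i j * x j
          = ∑ a : {i : Fin n // i ∉ S}, ∑ b : {i : Fin n // i ∉ S},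
              x a.1 * L a.1 b.1 * x b.1 := by
        rw [show (fun i => ∑ j, x i * L i j * x j) = fun i =>
          ∑ b : {i : Fin n // i ∉ S}, x i * L i b.1 * x b.1 from funext e1] at *
        exact hsum_sub _ (fun i hi => by
          apply Finset.sum_eq_zero; intro b _; simp [hxS i hi])
      rw [e2]
      have hxv : ∀ a : {i : Fin n // i ∉ S}, x a.1 = v a := by
        intro a; simp [hx, a.2]
      calc ∑ a : {i : Fin n // i ∉ S}, ∑ b : {i : Fin n // i ∉ S},
              x a.1 * L a.1 b.1 * x b.1
          = ∑ a : {i : Fin n // i ∉ S}, v a * ((B *ᵥ v) a) := by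
            apply Finset.sum_congr rfl
            intro a _
            rw [Matrix.mulVec, dotProduct, Finset.mul_sum]
            apply Finset.sum_congr rfl
            intro b _
            rw [hxv a, hxv b]
            simp [hB]; ring
        _ = 0 := by rw [hBv]; simp
    -- rewrite as sum of squares
    have hsq : ∑ i, ∑ j, A i j * (x i - x j)^2
        = 2 * ∑ i, ∑ j, x i * L i j * x j := by
      have expand : ∀ i j, A i j * (x i - x j)^2
          = A i j * (x i)^2 + A i j * (x j)^2 - 2 * (A i j * (x i * x j)) := by
        intro i j; ring
      have t1 : ∑ i, ∑ j, A i j * (x i)^2 = ∑ i, deg i * (x i)^2 := by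
        apply Finset.sum_congr rfl; intro i _
        rw [← Finset.sum_mul, ← hdeg]
      have t2 : ∑ i, ∑ j, A i j * (x j)^2 = ∑ j, deg j * (x j)^2 := by
        rw [Finset.sum_comm]
        apply Finset.sum_congr rfl; intro j _
        rw [← Finset.sum_mul]
        congr 1
        rw [hdeg j]
        exact Finset.sum_congr rfl (fun i _ => hAsymm i j)
      have tL : ∑ i, ∑ j, x i * L i j * x j
          = ∑ i, deg i * (x i)^2 - ∑ i, ∑ j, A i j * (x i * x j) := by
        have hdd : ∀ i, ∑ j, x i * Matrix.diagonal deg i j * x j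
            = deg i * (x i)^2 := by
          intro i
          rw [Finset.sum_eq_single i]
          · simp [Matrix.diagonal_apply]; ring
          · intro b _ hb; simp [Matrix.diagonal_apply, Ne.symm hb]
          · intro h; exact absurd (Finset.mem_univ i) h
        simp only [hL, Matrix.sub_apply, mul_sub, sub_mul, Finset.sum_sub_distrib]
        congr 1
        · exact Finset.sum_congr rfl (fun i _ => hdd i)
        · apply Finset.sum_congr rfl; intro i _
          apply Finset.sum_congr rfl; intro j _; ring
      calc ∑ i, ∑ j, A i j * (x i - x j)^2
          = ∑ i, ∑ j, (A i j * (x i)^2 + A i j * (x j)^2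
              - 2 * (A i j * (x i * x j))) := by
            apply Finset.sum_congr rfl; intro i _
            exact Finset.sum_congr rfl (fun j _ => expand i j)
        _ = (∑ i, ∑ j, A i j * (x i)^2) + (∑ i, ∑ j, A i j * (x j)^2)
              - 2 * ∑ i, ∑ j, A i j * (x i * x j) := by
            simp only [Finset.sum_add_distrib, Finset.sum_sub_distrib, Finset.mul_sum]
        _ = 2 * ∑ i, ∑ j, x i * L i j * x j := by
            rw [t1, t2, tL]; ring
    have hterm : ∀ i j, A i j * (x i - x j)^2 = 0 := by
      have hzero : ∑ p : Fin n × Fin n, A p.1 p.2 * (x p.1 - x p.2)^2 = 0 := by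
        rw [Fintype.sum_prod_type, hsq, hQ0]; ring
      have := (Finset.sum_eq_zero_iff_of_nonneg
        (fun p _ => mul_nonneg (hnonneg p.1 p.2) (sq_nonneg _))).mp hzero
      intro i j
      exact this (i, j) (Finset.mem_univ _)
    have hedge : ∀ i j, A i j ≠ 0 → x i = x j := by
      intro i j hij
      rcases mul_eq_zero.mp (hterm i j) with h | h
      · exact absurd h hij
      · have := pow_eq_zero_iff (n := 2) (by norm_num) |>.mp h
        linarith [sub_eq_zero.mp this]
    have hwalk : ∀ k : ℕ, ∀ i j, (A ^ k) i j ≠ 0 → x i = x j := by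
      intro k
      induction k with
      | zero =>
        intro i j h
        by_cases hij : i = j
        · rw [hij]
        · exact absurd (by simp [Matrix.one_apply, hij]) h
      | succ k ih =>
        intro i j h
        rw [pow_succ', Matrix.mul_apply] at h
        obtain ⟨m, _, hm⟩ := Finset.exists_ne_zero_of_sum_ne_zero h
        have h1 : A i m ≠ 0 := left_ne_zero_of_mul hm
        have h2 : (A ^ k) m j ≠ 0 := right_ne_zero_of_mul hm
        exact (hedge i m h1).trans (ih m j h2)
    have hx0 : ∀ i, x i = 0 := by
      intro i
      by_cases hi : i ∈ S
      · exact hxS i hi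
      · obtain ⟨s, hs⟩ := hS
        obtain ⟨k, hk⟩ := hconn i s
        rw [hwalk k i s hk]
        exact hxS s hs
    apply hv
    funext a
    have := hx0 a.1
    simpa [hx, a.2] using this
  -- invert the key equation
  have hBunit : IsUnit B.det := isUnit_iff_ne_zero.mpr hdet
  have hinv : (fun a : {i : Fin n // i ∉ S} => HS a.1)
      = B⁻¹ *ᵥ (fun a : {i : Fin n // i ∉ S} => deg a.1) := by
    rw [← hkey, Matrix.mulVec_mulVec, Matrix.nonsing_inv_mul B hBunit, Matrix.one_mulVec]
  -- conclude
  rw [hsum_sub (fun i => pi' i * HS i) (fun i hi => by simp [hHS0 i hi])]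
  apply Finset.sum_congr rfl
  intro a _
  have : HS a.1 = ∑ b : {i : Fin n // i ∉ S}, B⁻¹ a b * deg b.1 := by
    have := congrFun hinv a
    rw [this]
    simp [Matrix.mulVec, dotProduct]
  rw [this, Finset.mul_sum]
  apply Finset.sum_congr rfl
  intro b _
  rw [hB]
  ring
end

section
/- Let G=(V,E,w) be a connected weighted undirected non-bipartite graph with n vertices and let S ⊆ V be a nonempty vertex group. Then H(S) + K = Σ_{i=1}^n Σ_{j=1}^n π_i π_j D_{ij}(S), where K is the Kemeny constant and D_{ij}(S) = H_{iS} + Σ_{k∈S} P'_{[i,k]} H_{kj} is the group random detour time, with P'_{[i,k]} the probability that the random walk started at i, with all vertices of S made absorbing, is first absorbed at vertex k ∈ S. -/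
open Matrix BigOperators Finset

lemma harmonic_nonpos (n : ℕ) (A : Matrix (Fin n) (Fin n) ℝ)
    (hnonneg : ∀ i j, 0 ≤ A i j)
    (hconn : ∀ i j : Fin n, ∃ k : ℕ, (A ^ k) i j ≠ 0)
    (deg : Fin n → ℝ) (hdeg : ∀ i, deg i = ∑ j, A i j)
    (hdegpos : ∀ i, 0 < deg i)
    (S : Finset (Fin n)) (hS : S.Nonempty)
    (g : Fin n → ℝ) (hg0 : ∀ i ∈ S, g i = 0)
    (hgrec : ∀ i, i ∉ S → g i = ∑ l, (A i l / deg i) * g l) :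
    ∀ i, g i ≤ 0 := by
  obtain ⟨s, hsS⟩ := hS
  have hne : (Finset.univ : Finset (Fin n)).Nonempty := ⟨s, Finset.mem_univ s⟩
  obtain ⟨i0, _, hmax⟩ := Finset.exists_max_image Finset.univ g hne
  set M := g i0 with hM
  have hmax' : ∀ a : Fin n, g a ≤ M := fun a => hmax a (Finset.mem_univ a)
  -- propagation of maximum along edges
  have hprop : ∀ i, g i = M → i ∉ S → ∀ l, A i l ≠ 0 → g l = M := by
    intro i hi hiS l hAl
    have hrow : ∑ l, A i l / deg i = 1 := by
      rw [← Finset.sum_div, ← hdeg i, div_self (hdegpos i).ne']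
    have hzero : ∑ l, (A i l / deg i) * (M - g l) = 0 := by
      have : ∑ l, (A i l / deg i) * (M - g l)
          = (∑ l, A i l / deg i) * M - ∑ l, (A i l / deg i) * g l := by
        rw [Finset.sum_mul, ← Finset.sum_sub_distrib]
        congr 1; ext l; ring
      rw [this, hrow, ← hgrec i hiS, one_mul, hi, sub_self]
    have hterm := (Finset.sum_eq_zero_iff_of_nonneg (fun l _ =>
      mul_nonneg (div_nonneg (hnonneg i l) (hdegpos i).le)
        (sub_nonneg.mpr (hmax' l)))).mp ?_ l (Finset.mem_univ l)
    · have hpos : 0 < A i l / deg i :=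
        div_pos (lt_of_le_of_ne (hnonneg i l) (Ne.symm hAl)) (hdegpos i)
      have := mul_eq_zero.mp hterm
      rcases this with h | h
      · exact absurd h hpos.ne'
      · linarith [sub_eq_zero.mp h]
    · exact hzero
  -- along a path to S, the maximum must equal 0
  have hpath : ∀ k : ℕ, ∀ i : Fin n, g i = M → (A ^ k) i s ≠ 0 → M = 0 := by
    intro k
    induction k with
    | zero =>
      intro i hi h0
      have : i = s := by
        by_contra hne'
        exact h0 (by simp [Matrix.one_apply_ne hne'])
      rw [← hi, this]; exact hg0 s hsS
    | succ k ih =>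
      intro i hi hsucc
      by_cases hiS : i ∈ S
      · rw [← hi]; exact hg0 i hiS
      · have : (A ^ (k + 1)) i s = ∑ l, A i l * (A ^ k) l s := by
          rw [pow_succ', Matrix.mul_apply]
        rw [this] at hsucc
        obtain ⟨l, _, hl⟩ := Finset.exists_ne_zero_of_sum_ne_zero hsucc
        have hAl : A i l ≠ 0 := fun h => hl (by rw [h, zero_mul])
        have hAk : (A ^ k) l s ≠ 0 := fun h => hl (by rw [h, mul_zero])
        exact ih l (hprop i hi hiS l hAl) hAk
  obtain ⟨k, hk⟩ := hconn i0 s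
  have hM0 : M = 0 := hpath k i0 rfl hk
  intro i
  calc g i ≤ M := hmax' i
    _ = 0 := hM0

/-- For a connected weighted undirected non-bipartite graph with `n` vertices and a
nonempty vertex group `S`, `H(S) + K = Σ_i Σ_j π_i π_j D_{ij}(S)`, where `K` is the Kemeny
constant and `D_{ij}(S) = H_{iS} + Σ_{k∈S} P'_{[i,k]} H_{kj}` is the group random detour time,
with `P'_{[i,k]}` the probability that the random walk started at `i`, with all vertices of `S`
made absorbing, is first absorbed at vertex `k ∈ S`.  Hitting times `H`, group hitting times
`HS`, and absorption probabilities `P'` are characterized by their first-step recurrences with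
respect to the transition matrix `P i k = A i k / deg i`. -/
theorem gwc_plus_kemeny_eq_detour_sum
    (n : ℕ) (hn : 0 < n)
    (A : Matrix (Fin n) (Fin n) ℝ)
    (hsym : A.IsSymm)
    (hnonneg : ∀ i j, 0 ≤ A i j)
    (hloop : ∀ i, A i i = 0)
    (hconn : ∀ i j : Fin n, ∃ k : ℕ, (A ^ k) i j ≠ 0)
    (hnonbip : ¬ ∃ f : Fin n → Bool, ∀ i j, A i j ≠ 0 → f i ≠ f j)
    (deg : Fin n → ℝ) (hdeg : ∀ i, deg i = ∑ j, A i j)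
    (d : ℝ) (hd : d = ∑ i, deg i)
    (pi' : Fin n → ℝ) (hpi : ∀ i, pi' i = deg i / d)
    (H : Fin n → Fin n → ℝ)
    (hHdiag : ∀ j, H j j = 0)
    (hHrec : ∀ i j, i ≠ j → H i j = 1 + ∑ k, (A i k / deg i) * H k j)
    (K : ℝ) (hK : ∀ i, K = ∑ j, pi' j * H i j)
    (S : Finset (Fin n)) (hS : S.Nonempty)
    (HS : Fin n → ℝ)
    (hHS0 : ∀ i ∈ S, HS i = 0)
    (hHSrec : ∀ i, i ∉ S → HS i = 1 + ∑ k, (A i k / deg i) * HS k)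
    (P' : Fin n → Fin n → ℝ)
    (hP'abs : ∀ i ∈ S, ∀ k ∈ S, P' i k = if i = k then 1 else 0)
    (hP'rec : ∀ i, i ∉ S → ∀ k ∈ S, P' i k = ∑ l, (A i l / deg i) * P' l k) :
    (∑ i, pi' i * HS i) + K
      = ∑ i, ∑ j, pi' i * pi' j * (HS i + ∑ k ∈ S, P' i k * H k j) := by
  -- n ≠ 1 (non-bipartiteness rules out a single vertex)
  have hn1 : n ≠ 1 := by
    intro h
    subst h
    exact hnonbip ⟨fun _ => true, fun i j hij =>
      absurd (by rw [Subsingleton.elim i j, hloop]) hij⟩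
  -- all degrees are positive
  have hdegpos : ∀ i, 0 < deg i := by
    intro i
    have hnn : 0 ≤ deg i := by
      rw [hdeg i]; exact Finset.sum_nonneg fun j _ => hnonneg i j
    rcases hnn.lt_or_eq with h | h
    · exact h
    · exfalso
      have hzero : ∀ j, A i j = 0 := fun j =>
        (Finset.sum_eq_zero_iff_of_nonneg (fun j _ => hnonneg i j)).mp
          (by rw [← hdeg i, ← h]) j (Finset.mem_univ j)
      have hnt : Nontrivial (Fin n) := by
        rw [← Fintype.one_lt_card_iff_nontrivial, Fintype.card_fin]
        omega
      obtain ⟨j, hj⟩ := exists_ne i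
      obtain ⟨k, hk⟩ := hconn i j
      apply hk
      cases k with
      | zero => simp [Matrix.one_apply_ne (Ne.symm hj)]
      | succ k =>
        rw [pow_succ', Matrix.mul_apply]
        exact Finset.sum_eq_zero fun l _ => by rw [hzero l, zero_mul]
  -- total degree positive
  have hne : (Finset.univ : Finset (Fin n)).Nonempty :=
    Finset.univ_nonempty_iff.mpr (Fin.pos_iff_nonempty.mp hn)
  have hdpos : 0 < d := by
    rw [hd]; exact Finset.sum_pos (fun i _ => hdegpos i) hne
  have hpisum : ∑ j, pi' j = 1 := by
    have : ∑ j, pi' j = (∑ j, deg j) / d := by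
      rw [Finset.sum_div]; exact Finset.sum_congr rfl fun j _ => hpi j
    rw [this, ← hd, div_self hdpos.ne']
  -- absorption probabilities sum to 1
  have hP'sum : ∀ i, ∑ k ∈ S, P' i k = 1 := by
    set g : Fin n → ℝ := fun i => (∑ k ∈ S, P' i k) - 1 with hg
    have hrow : ∀ i, ∑ l, A i l / deg i = 1 := by
      intro i
      rw [← Finset.sum_div, ← hdeg i, div_self (hdegpos i).ne']
    have hg0 : ∀ i ∈ S, g i = 0 := by
      intro i hi
      have : ∑ k ∈ S, P' i k = 1 := by
        rw [Finset.sum_congr rfl fun k hk => hP'abs i hi k hk]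
        simp [Finset.sum_ite_eq, hi]
      simp [hg, this]
    have hgrec : ∀ i, i ∉ S → g i = ∑ l, (A i l / deg i) * g l := by
      intro i hiS
      have h1 : ∑ k ∈ S, P' i k = ∑ l, (A i l / deg i) * ∑ k ∈ S, P' l k := by
        rw [Finset.sum_congr rfl fun k hk => hP'rec i hiS k hk, Finset.sum_comm]
        exact Finset.sum_congr rfl fun l _ => by rw [Finset.mul_sum]
      have : ∑ l, (A i l / deg i) * g l
          = (∑ l, (A i l / deg i) * ∑ k ∈ S, P' l k) - ∑ l, A i l / deg i := by
        rw [← Finset.sum_sub_distrib]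
        exact Finset.sum_congr rfl fun l _ => by simp [hg]; ring
      rw [this, hrow, ← h1, hg]
    have h1 : ∀ i, g i ≤ 0 :=
      harmonic_nonpos n A hnonneg hconn deg hdeg hdegpos S hS g hg0 hgrec
    have h2 : ∀ i, (-g) i ≤ 0 := by
      apply harmonic_nonpos n A hnonneg hconn deg hdeg hdegpos S hS
      · intro i hi; simp [hg0 i hi]
      · intro i hiS
        simp only [Pi.neg_apply, mul_neg]
        rw [show (∑ x, -(A i x / deg i * g x)) = -(∑ x, A i x / deg i * g x) by
          rw [← Finset.sum_neg_distrib], ← hgrec i hiS]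
    intro i
    have := h2 i
    simp only [Pi.neg_apply, neg_nonpos] at this
    have : g i = 0 := le_antisymm (h1 i) this
    have := this
    simp only [hg, sub_eq_zero] at this
    exact this
  -- the main computation
  have key : ∀ i, ∑ j, pi' i * pi' j * (HS i + ∑ k ∈ S, P' i k * H k j)
      = pi' i * HS i + pi' i * K := by
    intro i
    have hsplit : ∑ j, pi' i * pi' j * (HS i + ∑ k ∈ S, P' i k * H k j)
        = (∑ j, pi' i * pi' j * HS i)
          + ∑ j, pi' i * pi' j * ∑ k ∈ S, P' i k * H k j := by
      rw [← Finset.sum_add_distrib]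
      exact Finset.sum_congr rfl fun j _ => by ring
    have h1 : ∑ j, pi' i * pi' j * HS i = pi' i * HS i := by
      have : ∑ j, pi' i * pi' j * HS i = pi' i * HS i * ∑ j, pi' j := by
        rw [Finset.mul_sum]
        exact Finset.sum_congr rfl fun j _ => by ring
      rw [this, hpisum, mul_one]
    have h2 : ∑ j, pi' i * pi' j * ∑ k ∈ S, P' i k * H k j = pi' i * K := by
      have e1 : ∑ j, pi' i * pi' j * ∑ k ∈ S, P' i k * H k j
          = pi' i * ∑ k ∈ S, P' i k * ∑ j, pi' j * H k j := by
        rw [Finset.mul_sum]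
        rw [show (∑ j, pi' i * pi' j * ∑ k ∈ S, P' i k * H k j)
            = ∑ j, ∑ k ∈ S, pi' i * (P' i k * (pi' j * H k j)) from
          Finset.sum_congr rfl fun j _ => by
            rw [Finset.mul_sum]; exact Finset.sum_congr rfl fun k _ => by ring]
        rw [Finset.sum_comm]
        exact Finset.sum_congr rfl fun k _ => by
          rw [Finset.mul_sum, Finset.mul_sum]
      have h3 : ∑ k ∈ S, P' i k * ∑ j, pi' j * H k j = K := by
        rw [show (∑ k ∈ S, P' i k * ∑ j, pi' j * H k j) = ∑ k ∈ S, P' i k * K from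
          Finset.sum_congr rfl fun k _ => by rw [← hK k], ← Finset.sum_mul,
          hP'sum i, one_mul]
      rw [e1, h3]
    rw [hsplit, h1, h2]
  rw [Finset.sum_congr rfl fun i _ => key i, Finset.sum_add_distrib, ← Finset.sum_mul,
    hpisum, one_mul]
end

section
/- Let G=(V,E,w) be a connected weighted undirected graph and S a nonempty proper subset of the vertex set V. Then for any vertex u ∈ V∖S, the group walk centrality is monotone: H(S) ≥ H(S ∪ {u}). -/
open Matrix BigOperators Finset

/-- Discrete minimum principle: if `g` is nonnegative on `T` and a supersolution
(w.r.t. the random walk) off `T`, and the graph is connected, then `g ≥ 0` everywhere. -/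
lemma gwc_min_principle (n : ℕ) (A : Matrix (Fin n) (Fin n) ℝ)
    (hnonneg : ∀ i j, 0 ≤ A i j)
    (hconn : ∀ i j : Fin n, ∃ k : ℕ, (A ^ k) i j ≠ 0)
    (deg : Fin n → ℝ) (hdeg : ∀ i, deg i = ∑ j, A i j)
    (hdegpos : ∀ i, 0 < deg i)
    (T : Finset (Fin n)) (t0 : Fin n) (ht0 : t0 ∈ T)
    (g : Fin n → ℝ)
    (hgT : ∀ i ∈ T, 0 ≤ g i)
    (hrec : ∀ i, i ∉ T → ∑ k, (A i k / deg i) * g k ≤ g i) :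
    ∀ i, 0 ≤ g i := by
  have hP1 : ∀ i, ∑ k, A i k / deg i = 1 := by
    intro i
    rw [← Finset.sum_div, ← hdeg i, div_self (hdegpos i).ne']
  obtain ⟨i0, -, hmin⟩ := Finset.exists_min_image Finset.univ g ⟨t0, Finset.mem_univ t0⟩
  set m := g i0 with hm
  by_contra hcon
  push_neg at hcon
  obtain ⟨iw, hiw⟩ := hcon
  have hmneg : m < 0 := lt_of_le_of_lt (hmin iw (Finset.mem_univ iw)) hiw
  have hmle : ∀ j, m ≤ g j := fun j => hmin j (Finset.mem_univ j)
  -- propagation of the minimum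
  have claim : ∀ k : ℕ, ∀ i j : Fin n, g i = m → (A ^ k) i j ≠ 0 → g j = m := by
    intro k
    induction k with
    | zero =>
      intro i j hgi hne
      rw [pow_zero, Matrix.one_apply] at hne
      by_cases h : i = j
      · rw [← h]; exact hgi
      · simp [h] at hne
    | succ k ih =>
      intro i j hgi hne
      rw [pow_succ'] at hne
      rw [Matrix.mul_apply] at hne
      obtain ⟨l, -, hl⟩ := Finset.exists_ne_zero_of_sum_ne_zero hne
      have hAil : A i l ≠ 0 := fun h => hl (by rw [h, zero_mul])
      have hAk : (A ^ k) l j ≠ 0 := fun h => hl (by rw [h, mul_zero])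
      -- i is not in T since g i = m < 0
      have hiT : i ∉ T := fun hiT => absurd (hgT i hiT) (by rw [hgi]; exact not_le.mpr hmneg)
      have hsum := hrec i hiT
      -- ∑ (A i k / deg i) * (g k - m) ≤ 0 with nonneg terms
      have hsum2 : ∑ k', (A i k' / deg i) * (g k' - m) ≤ 0 := by
        have : ∑ k', (A i k' / deg i) * (g k' - m)
            = (∑ k', (A i k' / deg i) * g k') - m * ∑ k', (A i k' / deg i) := by
          rw [Finset.mul_sum, ← Finset.sum_sub_distrib]
          congr 1; ext k'; ring
        rw [this, hP1 i, mul_one]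
        linarith [hsum, hgi.le]
      have hterm : ∀ k' ∈ Finset.univ, 0 ≤ (A i k' / deg i) * (g k' - m) := by
        intro k' _
        exact mul_nonneg (div_nonneg (hnonneg i k') (hdegpos i).le) (by linarith [hmle k'])
      have hzero : ∀ k' ∈ Finset.univ, (A i k' / deg i) * (g k' - m) = 0 := by
        rw [← Finset.sum_eq_zero_iff_of_nonneg hterm]
        exact le_antisymm hsum2 (Finset.sum_nonneg hterm)
      have hgl : g l = m := by
        have := hzero l (Finset.mem_univ l)
        rcases mul_eq_zero.mp this with h | h
        · exact absurd (div_eq_zero_iff.mp h) (by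
            push_neg
            exact ⟨hAil, (hdegpos i).ne'⟩)
        · linarith
      exact ih l j hgl hAk
  obtain ⟨k, hk⟩ := hconn i0 t0
  have := claim k i0 t0 rfl hk
  exact absurd (hgT t0 ht0) (by rw [this]; exact not_le.mpr hmneg)

/-- For a connected weighted undirected graph, a nonempty proper subset `S` of the
vertex set and any vertex `u ∉ S`, the group walk centrality is monotone:
`H(S) ≥ H(S ∪ {u})`.  Here `H(S) = Σ_i π_i H_{iS}` where the group hitting times
`HT S i = H_{iS}` are characterized by vanishing on `S` and the first-step recurrence with
respect to the transition matrix `P i k = A i k / deg i`. -/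
theorem gwc_monotone
    (n : ℕ) (hn : 0 < n)
    (A : Matrix (Fin n) (Fin n) ℝ)
    (hsym : A.IsSymm)
    (hnonneg : ∀ i j, 0 ≤ A i j)
    (hloop : ∀ i, A i i = 0)
    (hconn : ∀ i j : Fin n, ∃ k : ℕ, (A ^ k) i j ≠ 0)
    (deg : Fin n → ℝ) (hdeg : ∀ i, deg i = ∑ j, A i j)
    (d : ℝ) (hd : d = ∑ i, deg i)
    (pi' : Fin n → ℝ) (hpi : ∀ i, pi' i = deg i / d)
    (HT : Finset (Fin n) → Fin n → ℝ)
    (hHT0 : ∀ T : Finset (Fin n), T.Nonempty → ∀ i ∈ T, HT T i = 0)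
    (hHTrec : ∀ T : Finset (Fin n), T.Nonempty → ∀ i, i ∉ T →
      HT T i = 1 + ∑ k, (A i k / deg i) * HT T k)
    (S : Finset (Fin n)) (hS : S.Nonempty) (hSproper : S ≠ Finset.univ)
    (u : Fin n) (hu : u ∉ S) :
    ∑ i, pi' i * HT (insert u S) i ≤ ∑ i, pi' i * HT S i := by
  obtain ⟨s, hs⟩ := hS
  have hsu : s ≠ u := fun h => hu (h ▸ hs)
  -- all degrees are positive
  have hdegpos : ∀ i, 0 < deg i := by
    intro i
    have hj : ∃ j : Fin n, j ≠ i := by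
      by_cases h : i = u
      · exact ⟨s, by rw [h]; exact hsu⟩
      · exact ⟨u, fun h' => h h'.symm⟩
    obtain ⟨j, hj⟩ := hj
    obtain ⟨k, hk⟩ := hconn i j
    match k with
    | 0 =>
      exfalso
      rw [pow_zero, Matrix.one_apply] at hk
      simp [hj.symm] at hk
    | k + 1 =>
      rw [pow_succ', Matrix.mul_apply] at hk
      obtain ⟨l, -, hl⟩ := Finset.exists_ne_zero_of_sum_ne_zero hk
      have hAil : A i l ≠ 0 := fun h => hl (by rw [h, zero_mul])
      have hpos : 0 < A i l := lt_of_le_of_ne (hnonneg i l) (Ne.symm hAil)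
      rw [hdeg i]
      calc 0 < A i l := hpos
        _ ≤ ∑ j', A i j' := Finset.single_le_sum (fun j' _ => hnonneg i j') (Finset.mem_univ l)
  have hSne : S.Nonempty := ⟨s, hs⟩
  have hTne : (insert u S).Nonempty := ⟨u, Finset.mem_insert_self u S⟩
  -- HT S is nonnegative
  have hHTSnonneg : ∀ i, 0 ≤ HT S i := by
    apply gwc_min_principle n A hnonneg hconn deg hdeg hdegpos S s hs
    · intro i hi; rw [hHT0 S hSne i hi]
    · intro i hi
      rw [hHTrec S hSne i hi]
      linarith
  -- HT (insert u S) ≤ HT S pointwise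
  have hpt : ∀ i, HT (insert u S) i ≤ HT S i := by
    have := gwc_min_principle n A hnonneg hconn deg hdeg hdegpos (insert u S) u
      (Finset.mem_insert_self u S) (fun i => HT S i - HT (insert u S) i)
      (by
        intro i hi
        rcases Finset.mem_insert.mp hi with h | h
        · rw [h, hHT0 (insert u S) hTne u (Finset.mem_insert_self u S), sub_zero]
          exact hHTSnonneg u
        · rw [hHT0 S hSne i h, hHT0 (insert u S) hTne i (Finset.mem_insert_of_mem h)]
          norm_num)
      (by
        intro i hi
        have hiS : i ∉ S := fun h => hi (Finset.mem_insert_of_mem h)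
        rw [hHTrec S hSne i hiS, hHTrec (insert u S) hTne i hi]
        have : ∑ k, (A i k / deg i) * (HT S k - HT (insert u S) k)
            = (∑ k, (A i k / deg i) * HT S k) - ∑ k, (A i k / deg i) * HT (insert u S) k := by
          rw [← Finset.sum_sub_distrib]
          congr 1; ext k; ring
        rw [this]
        linarith)
    intro i
    have h := this i
    linarith
  -- conclude by summing
  have hdpos : 0 < d := by
    rw [hd]
    exact Finset.sum_pos (fun i _ => hdegpos i) ⟨s, Finset.mem_univ s⟩
  apply Finset.sum_le_sum
  intro i _
  apply mul_le_mul_of_nonneg_left (hpt i)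
  rw [hpi i]
  exact div_nonneg (hdegpos i).le hdpos.le
end

section
/- Let G=(V,E,w) be a connected weighted undirected graph and let S, T be nonempty vertex sets with S ⊆ T ⊊ V. Then for any vertex u ∈ V∖T, the group walk centrality is supermodular: H(S) − H(S ∪ {u}) ≥ H(T) − H(T ∪ {u}). -/
open Matrix BigOperators Finset

/-- Discrete minimum principle: if `f` is nonnegative on `W` and superharmonic
(with respect to `P i k = A i k / deg i`) off `W`, then `f` is nonnegative. -/
lemma gwc_minprin (n : ℕ)
    (A : Matrix (Fin n) (Fin n) ℝ)
    (hnonneg : ∀ i j, 0 ≤ A i j)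
    (hconn : ∀ i j : Fin n, ∃ k : ℕ, (A ^ k) i j ≠ 0)
    (deg : Fin n → ℝ) (hdeg : ∀ i, deg i = ∑ j, A i j)
    (W : Finset (Fin n)) (hW : W.Nonempty)
    (f : Fin n → ℝ)
    (hbd : ∀ i ∈ W, 0 ≤ f i)
    (hharm : ∀ i, i ∉ W → ∑ k, (A i k / deg i) * f k ≤ f i) :
    ∀ i, 0 ≤ f i := by
  obtain ⟨w₀, hw₀⟩ := hW
  obtain ⟨i₀, -, hmin⟩ := Finset.exists_min_image Finset.univ f ⟨w₀, Finset.mem_univ _⟩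
  set m := f i₀ with hm
  have hmin' : ∀ j, m ≤ f j := fun j => hmin j (Finset.mem_univ j)
  have step : ∀ i, f i = m → i ∉ W → ∀ k, A i k ≠ 0 → f k = m := by
    intro i hfi hiW k hAik
    have hApos : 0 < A i k := lt_of_le_of_ne (hnonneg i k) (Ne.symm hAik)
    have hdegpos : 0 < deg i := by
      rw [hdeg]
      have h1 : A i k ≤ ∑ j, A i j :=
        Finset.single_le_sum (fun j _ => hnonneg i j) (Finset.mem_univ k)
      linarith
    have hsum1 : ∑ j, (A i j / deg i) = 1 := by
      rw [← Finset.sum_div, ← hdeg i, div_self (ne_of_gt hdegpos)]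
    have hle := hharm i hiW
    rw [hfi] at hle
    have hterm_nonneg : ∀ j ∈ Finset.univ, 0 ≤ (A i j / deg i) * (f j - m) :=
      fun j _ => mul_nonneg (div_nonneg (hnonneg i j) hdegpos.le) (by linarith [hmin' j])
    have hzero : ∑ j, (A i j / deg i) * (f j - m) = 0 := by
      have expand : ∑ j, (A i j / deg i) * (f j - m)
          = (∑ j, (A i j / deg i) * f j) - m := by
        simp only [mul_sub]
        rw [Finset.sum_sub_distrib, ← Finset.sum_mul, hsum1, one_mul]
      have hge : 0 ≤ ∑ j, (A i j / deg i) * (f j - m) := Finset.sum_nonneg hterm_nonneg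
      rw [expand]
      linarith
    have hk0 := (Finset.sum_eq_zero_iff_of_nonneg hterm_nonneg).mp hzero k (Finset.mem_univ k)
    have hAk : A i k / deg i ≠ 0 := div_ne_zero hAik (ne_of_gt hdegpos)
    rcases mul_eq_zero.mp hk0 with h | h
    · exact absurd h hAk
    · linarith
  have prop : ∀ (k : ℕ) (i j : Fin n), (A ^ k) i j ≠ 0 → f i = m →
      (f j = m ∨ ∃ w ∈ W, f w = m) := by
    intro k
    induction k with
    | zero =>
      intro i j h hfi
      rw [pow_zero] at h
      by_cases hij : i = j
      · left; rw [← hij]; exact hfi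
      · exact absurd (Matrix.one_apply_ne hij) h
    | succ k ih =>
      intro i j h hfi
      by_cases hiW : i ∈ W
      · exact Or.inr ⟨i, hiW, hfi⟩
      · rw [pow_succ', Matrix.mul_apply] at h
        obtain ⟨l, -, hl⟩ := Finset.exists_ne_zero_of_sum_ne_zero h
        have hAil : A i l ≠ 0 := fun hz => hl (by rw [hz, zero_mul])
        have hAk : (A ^ k) l j ≠ 0 := fun hz => hl (by rw [hz, mul_zero])
        exact ih l j hAk (step i hfi hiW l hAil)
  have hm0 : 0 ≤ m := by
    obtain ⟨k, hk⟩ := hconn i₀ w₀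
    rcases prop k i₀ w₀ hk rfl with h | ⟨w, hwW, hwm⟩
    · rw [← h]; exact hbd w₀ hw₀
    · rw [← hwm]; exact hbd w hwW
  intro i; linarith [hmin' i]

/-- For a connected weighted undirected graph, nonempty vertex sets `S ⊆ T ⊊ V`,
and any vertex `u ∈ V∖T`, the group walk centrality is supermodular:
`H(S) − H(S ∪ {u}) ≥ H(T) − H(T ∪ {u})`.  Here `H(S) = Σ_i π_i H_{iS}` where the group hitting
times `HT S i = H_{iS}` are characterized by vanishing on `S` and the first-step recurrence with
respect to the transition matrix `P i k = A i k / deg i`. -/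
theorem gwc_supermodular
    (n : ℕ) (hn : 0 < n)
    (A : Matrix (Fin n) (Fin n) ℝ)
    (hsym : A.IsSymm)
    (hnonneg : ∀ i j, 0 ≤ A i j)
    (hloop : ∀ i, A i i = 0)
    (hconn : ∀ i j : Fin n, ∃ k : ℕ, (A ^ k) i j ≠ 0)
    (deg : Fin n → ℝ) (hdeg : ∀ i, deg i = ∑ j, A i j)
    (d : ℝ) (hd : d = ∑ i, deg i)
    (pi' : Fin n → ℝ) (hpi : ∀ i, pi' i = deg i / d)
    (HT : Finset (Fin n) → Fin n → ℝ)
    (hHT0 : ∀ W : Finset (Fin n), W.Nonempty → ∀ i ∈ W, HT W i = 0)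
    (hHTrec : ∀ W : Finset (Fin n), W.Nonempty → ∀ i, i ∉ W →
      HT W i = 1 + ∑ k, (A i k / deg i) * HT W k)
    (S T : Finset (Fin n)) (hS : S.Nonempty) (hST : S ⊆ T)
    (hTproper : T ⊂ Finset.univ)
    (u : Fin n) (hu : u ∉ T) :
    (∑ i, pi' i * HT T i) - ∑ i, pi' i * HT (insert u T) i
      ≤ (∑ i, pi' i * HT S i) - ∑ i, pi' i * HT (insert u S) i := by
  -- nonnegativity of hitting times
  have hnn : ∀ W : Finset (Fin n), W.Nonempty → ∀ i, 0 ≤ HT W i := by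
    intro W hW
    refine gwc_minprin n A hnonneg hconn deg hdeg W hW (HT W)
      (fun i hi => le_of_eq (hHT0 W hW i hi).symm) ?_
    intro i hi
    rw [hHTrec W hW i hi]
    linarith
  -- monotonicity: enlarging the target set decreases hitting times
  have hmono : ∀ W W' : Finset (Fin n), W.Nonempty → W ⊆ W' →
      ∀ i, HT W' i ≤ HT W i := by
    intro W W' hW hsub
    have hW' : W'.Nonempty := hW.mono hsub
    have key := gwc_minprin n A hnonneg hconn deg hdeg W' hW'
      (fun i => HT W i - HT W' i) ?_ ?_
    · intro i; have := key i; linarith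
    · intro i hi
      by_cases hiW : i ∈ W
      · rw [hHT0 W hW i hiW, hHT0 W' hW' i hi]; norm_num
      · rw [hHT0 W' hW' i hi]
        simpa using hnn W hW i
    · intro i hi
      have hiW : i ∉ W := fun h => hi (hsub h)
      show ∑ k, A i k / deg i * (HT W k - HT W' k) ≤ HT W i - HT W' i
      have heq : ∑ k, A i k / deg i * (HT W k - HT W' k)
          = HT W i - HT W' i := by
        simp only [mul_sub]
        rw [Finset.sum_sub_distrib, hHTrec W hW i hiW, hHTrec W' hW' i hi]
        ring
      exact le_of_eq heq
  -- pointwise supermodularity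
  have hT : T.Nonempty := hS.mono hST
  have huT : (insert u T).Nonempty := Finset.insert_nonempty u T
  have huS : (insert u S).Nonempty := Finset.insert_nonempty u S
  have hkey : ∀ i, HT T i - HT (insert u T) i ≤ HT S i - HT (insert u S) i := by
    have key := gwc_minprin n A hnonneg hconn deg hdeg (insert u T) huT
      (fun i => (HT S i - HT (insert u S) i) - (HT T i - HT (insert u T) i)) ?_ ?_
    · intro i; have := key i; linarith
    · intro i hi
      rcases Finset.mem_insert.mp hi with rfl | hiT
      · rw [hHT0 (insert i S) huS i (Finset.mem_insert_self i S),
            hHT0 (insert i T) huT i (Finset.mem_insert_self i T)]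
        have := hmono S T hS hST i
        linarith
      · rw [hHT0 T hT i hiT, hHT0 (insert u T) huT i (Finset.mem_insert_of_mem hiT)]
        have := hmono S (insert u S) hS (Finset.subset_insert u S) i
        linarith
    · intro i hi
      have hiT : i ∉ T := fun h => hi (Finset.mem_insert_of_mem h)
      have hiS : i ∉ S := fun h => hiT (hST h)
      have hiuS : i ∉ insert u S := by
        intro h
        rcases Finset.mem_insert.mp h with rfl | h
        · exact hi (Finset.mem_insert_self _ _)
        · exact hiS h
      show ∑ k, A i k / deg i *
          ((HT S k - HT (insert u S) k) - (HT T k - HT (insert u T) k))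
          ≤ (HT S i - HT (insert u S) i) - (HT T i - HT (insert u T) i)
      have heq : ∑ k, A i k / deg i *
          ((HT S k - HT (insert u S) k) - (HT T k - HT (insert u T) k))
          = (HT S i - HT (insert u S) i) - (HT T i - HT (insert u T) i) := by
        simp only [mul_sub]
        rw [Finset.sum_sub_distrib, Finset.sum_sub_distrib, Finset.sum_sub_distrib,
          hHTrec S hS i hiS, hHTrec T hT i hiT,
          hHTrec (insert u S) huS i hiuS, hHTrec (insert u T) huT i hi]
        ring
      exact le_of_eq heq
  -- stationary distribution is nonnegative
  have hpinn : ∀ i, 0 ≤ pi' i := by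
    intro i
    rw [hpi]
    refine div_nonneg ?_ ?_
    · rw [hdeg]; exact Finset.sum_nonneg fun j _ => hnonneg i j
    · rw [hd]
      exact Finset.sum_nonneg fun i _ => by
        rw [hdeg]; exact Finset.sum_nonneg fun j _ => hnonneg i j
  have e : ∀ W W' : Finset (Fin n),
      (∑ i, pi' i * HT W i) - ∑ i, pi' i * HT W' i
        = ∑ i, pi' i * (HT W i - HT W' i) := by
    intro W W'
    rw [← Finset.sum_sub_distrib]
    exact Finset.sum_congr rfl fun i _ => by ring
  rw [e T (insert u T), e S (insert u S)]
  exact Finset.sum_le_sum fun i _ =>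
    mul_le_mul_of_nonneg_left (hkey i) (hpinn i)
end

section
/- Let G=(V,E) be a connected 3-regular graph with n vertices in which every edge has unit weight, and let S ⊆ V be a vertex cover of G (every edge of E is incident to at least one vertex of S) with |S| = k. Then the group walk centrality satisfies H(S) = (n − k)/n. -/
open Matrix BigOperators Finset

/-- Let `G` be a connected 3-regular graph with `n` vertices and unit edge weights,
and let `S` be a vertex cover of `G` with `|S| = k`.  Then the group walk centrality satisfies
`H(S) = (n − k)/n`.  Here `H(S) = Σ_i π_i H_{iS}` with `π` the stationary distribution
`π_i = deg i / d`, and the group hitting times `HS i = H_{iS}` are characterized by vanishing on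
`S` and the first-step recurrence. -/
theorem gwc_of_vertex_cover_cubic
    (n k : ℕ) (hn : 0 < n)
    (A : Matrix (Fin n) (Fin n) ℝ)
    (hsym : A.IsSymm)
    (h01 : ∀ i j, A i j = 0 ∨ A i j = 1)
    (hloop : ∀ i, A i i = 0)
    (hconn : ∀ i j : Fin n, ∃ p : ℕ, (A ^ p) i j ≠ 0)
    (deg : Fin n → ℝ) (hdeg : ∀ i, deg i = ∑ j, A i j)
    (hreg : ∀ i, deg i = 3)
    (d : ℝ) (hd : d = ∑ i, deg i)
    (pi' : Fin n → ℝ) (hpi : ∀ i, pi' i = deg i / d)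
    (S : Finset (Fin n))
    (hcover : ∀ i j, A i j ≠ 0 → i ∈ S ∨ j ∈ S)
    (hcard : S.card = k)
    (HS : Fin n → ℝ)
    (hHS0 : ∀ i ∈ S, HS i = 0)
    (hHSrec : ∀ i, i ∉ S → HS i = 1 + ∑ l, (A i l / deg i) * HS l) :
    ∑ i, pi' i * HS i = ((n : ℝ) - (k : ℝ)) / (n : ℝ) := by

  have hd3 : d = 3 * n := by
    rw [hd]
    simp [hreg, Finset.sum_const, mul_comm]
  have hn0 : (n : ℝ) ≠ 0 := Nat.cast_ne_zero.mpr hn.ne'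
  have hHS1 : ∀ i, i ∉ S → HS i = 1 := by
    intro i hi
    rw [hHSrec i hi]
    have : ∀ l, A i l / deg i * HS l = 0 := by
      intro l
      by_cases hl : l ∈ S
      · rw [hHS0 l hl, mul_zero]
      · have : A i l = 0 := by
          by_contra h
          rcases hcover i l h with h' | h' <;> [exact hi h'; exact hl h']
        rw [this]; simp
    simp [this]
  have hsplit : ∑ i, pi' i * HS i = ∑ i ∈ Sᶜ, pi' i := by
    rw [← Finset.sum_compl_add_sum S]
    have h1 : ∑ i ∈ S, pi' i * HS i = 0 :=
      Finset.sum_eq_zero fun i hi => by rw [hHS0 i hi, mul_zero]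
    have h2 : ∑ i ∈ Sᶜ, pi' i * HS i = ∑ i ∈ Sᶜ, pi' i :=
      Finset.sum_congr rfl fun i hi => by
        rw [hHS1 i (Finset.mem_compl.mp hi), mul_one]
    rw [h1, h2, add_zero]
  rw [hsplit]
  have : ∀ i, pi' i = 1 / n := by
    intro i
    rw [hpi, hreg, hd3]
    field_simp
  simp only [this]
  rw [Finset.sum_const, Finset.card_compl, hcard, Fintype.card_fin]
  have hk : k ≤ n := by
    calc k = S.card := hcard.symm
    _ ≤ (Finset.univ : Finset (Fin n)).card := S.card_le_univ
    _ = n := by simp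
  rw [nsmul_eq_mul, Nat.cast_sub hk]
  field_simp
end

section
/- Let G=(V,E,w) be a connected weighted undirected graph with Laplacian L and let S be a nonempty proper subset of V. Then for any vertex u ∈ V∖S, the marginal gain Δ(u,S) = H(S) − H(S ∪ {u}) satisfies Δ(u,S) = (e_u^T (L_{−S})^{−1} d_{−S})² / (d · e_u^T (L_{−S})^{−1} e_u). -/
open Matrix BigOperators Finset

/-- Group walk centrality `H(S) = π_{−S}ᵀ (L_{−S})⁻¹ d_{−S}`, where the subscript `−S` denotes
deletion of the rows/columns (entries) indexed by `S`. -/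
noncomputable def gwcAlg (n : ℕ) (L : Matrix (Fin n) (Fin n) ℝ) (p dg : Fin n → ℝ)
    (S : Finset (Fin n)) : ℝ :=
  ∑ a : {i : Fin n // i ∉ S}, ∑ b : {i : Fin n // i ∉ S},
    p a.1 *
      ((L.submatrix (fun x : {i : Fin n // i ∉ S} => (x : Fin n))
          (fun x : {i : Fin n // i ∉ S} => (x : Fin n)))⁻¹ a b) *
      dg b.1

/-!
Write `Q = (L_{−S})⁻¹`. Removing the row and column of `u` from `L_{−S}` inverts to one step of
Gaussian elimination on `Q` with pivot `Q_uu`: `(L_{−(S ∪ {u})})⁻¹` is the restriction of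
`Q − Q e_u e_uᵀ Q / Q_uu`. Hence `H(S) − H(S ∪ {u}) = (πᵀ Q e_u)(e_uᵀ Q d) / Q_uu`, and since `Q`
is symmetric and `π` is the degree vector divided by the total degree, this is the stated square. The pivot is legitimate because `L_{−S}`
is positive definite: its quadratic form is `½ ∑ A_ij (y_i − y_j)²` for `y` vanishing on `S`, and
by connectivity this vanishes only if `y` is constant, i.e. zero.
-/

theorem Fintype.sum_sum_comp_of_injective {α β M : Type*} [Fintype α] [Fintype β]
    [AddCommMonoid M] (ι : β → α) (hι : Function.Injective ι) (f : α → α → M)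
    (hleft : ∀ a ∉ Set.range ι, ∀ b, f a b = 0) (hright : ∀ b ∉ Set.range ι, ∀ a, f a b = 0) :
    ∑ i, ∑ j, f (ι i) (ι j) = ∑ a, ∑ b, f a b :=
  Fintype.sum_of_injective ι hι _ _ (fun a ha => Finset.sum_eq_zero fun b _ => hleft a ha b)
    fun _ => Fintype.sum_of_injective ι hι _ _ (fun b hb => hright b hb _) fun _ => rfl

namespace Matrix

variable {α β K : Type*} [Field K]

/-- One step of Gaussian elimination with pivot `Q u u`: when `Q u u ≠ 0` this is the Schur
complement of that entry, padded with a zero row and column `u`. -/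
def pivotOut (Q : Matrix α α K) (u : α) : Matrix α α K :=
  of fun a b => Q a b - Q a u * Q u b / Q u u

variable {Q : Matrix α α K} {u : α}

theorem pivotOut_apply_pivot_left (h : Q u u ≠ 0) (b : α) : Q.pivotOut u u b = 0 := by
  simp [pivotOut, mul_div_cancel_left₀ _ h]

theorem pivotOut_apply_pivot_right (h : Q u u ≠ 0) (a : α) : Q.pivotOut u a u = 0 := by
  simp [pivotOut, mul_div_cancel_right₀ _ h]

variable [Fintype α] [Fintype β]

theorem sum_sum_mul_sub_sum_sum_mul_pivotOut (hQ : Q.IsSymm) (u : α) (g : α → K) (c : K) :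
    ∑ a, ∑ b, g a / c * Q a b * g b - ∑ a, ∑ b, g a / c * Q.pivotOut u a b * g b
      = (∑ b, Q u b * g b) ^ 2 / (c * Q u u) := by
  have hcol : ∑ a, g a * Q a u = ∑ a, Q u a * g a :=
    sum_congr rfl fun a _ => by rw [hQ.apply, mul_comm]
  calc _ = ∑ a, ∑ b, (g a * Q a u) * (Q u b * g b) / (c * Q u u) := by
          simp only [pivotOut, of_apply, ← sum_sub_distrib]
          refine sum_congr rfl fun a _ => sum_congr rfl fun b _ => ?_
          ring
    _ = (∑ a, g a * Q a u) * (∑ b, Q u b * g b) / (c * Q u u) := by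
          simp only [sum_div, sum_mul_sum]
    _ = _ := by rw [hcol, sq]

variable [DecidableEq α] [DecidableEq β]

theorem inv_submatrix_eq_pivotOut (M : Matrix α α K) (hM : IsUnit M.det) (h : M⁻¹ u u ≠ 0)
    (ι : β → α) (hι : Function.Injective ι) (hrange : Set.range ι = {u}ᶜ) :
    (M.submatrix ι ι)⁻¹ = (M⁻¹.pivotOut u).submatrix ι ι := by
  have hu : ∀ a ∉ Set.range ι, a = u := by simp [hrange]
  have hne : ∀ i, ι i ≠ u := fun i hi => by simpa [hi] using hrange.le ⟨i, rfl⟩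
  apply inv_eq_right_inv
  ext i j
  have hMM : M * M⁻¹ = 1 := mul_nonsing_inv M hM
  calc (M.submatrix ι ι * (M⁻¹.pivotOut u).submatrix ι ι) i j
      = ∑ a, M (ι i) a * M⁻¹.pivotOut u a (ι j) :=
        Fintype.sum_of_injective ι hι _ _
          (fun a ha => by rw [hu a ha, pivotOut_apply_pivot_left h, mul_zero]) fun _ => rfl
    _ = (M * M⁻¹) (ι i) (ι j) - (M * M⁻¹) (ι i) u * M⁻¹ u (ι j) / M⁻¹ u u := by
        simp only [pivotOut, of_apply, mul_sub, sum_sub_distrib, mul_apply, sum_div, sum_mul]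
        congr 1; refine sum_congr rfl fun a _ => ?_; ring
    _ = (1 : Matrix β β K) i j := by
        simp [hMM, one_apply, hne i, hι.eq_iff]

theorem sum_sum_mul_inv_submatrix_mul (M : Matrix α α K) (hM : IsUnit M.det) (h : M⁻¹ u u ≠ 0)
    (ι : β → α) (hι : Function.Injective ι) (hrange : Set.range ι = {u}ᶜ) (f g : α → K) :
    ∑ i, ∑ j, f (ι i) * (M.submatrix ι ι)⁻¹ i j * g (ι j)
      = ∑ a, ∑ b, f a * M⁻¹.pivotOut u a b * g b := by
  have hu : ∀ a ∉ Set.range ι, a = u := by simp [hrange]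
  rw [inv_submatrix_eq_pivotOut M hM h ι hι hrange]
  exact Fintype.sum_sum_comp_of_injective ι hι (fun a b => f a * M⁻¹.pivotOut u a b * g b)
    (fun a ha b => by simp [hu a ha, pivotOut_apply_pivot_left h])
    (fun b hb a => by simp [hu b hb, pivotOut_apply_pivot_right h])

end Matrix

section Laplacian

variable {V : Type*} [Fintype V] [DecidableEq V] {A : Matrix V V ℝ} {deg : V → ℝ}

theorem sum_sum_mul_laplacian_mul (hsym : A.IsSymm) (hdeg : ∀ i, deg i = ∑ j, A i j)
    (y : V → ℝ) :
    ∑ i, ∑ j, y i * (diagonal deg - A) i j * y j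
      = (1 / 2) * ∑ i, ∑ j, A i j * (y i - y j) ^ 2 := by
  have hdiag : ∑ i, ∑ j, y i * diagonal deg i j * y j = ∑ i, ∑ j, A i j * y i ^ 2 := by
    simp only [diagonal_apply, mul_ite, ite_mul, mul_zero, zero_mul, sum_ite_eq, mem_univ,
      if_true, hdeg, ← sum_mul]
    exact sum_congr rfl fun _ _ => by ring
  have hswap : ∑ i, ∑ j, A i j * y j ^ 2 = ∑ i, ∑ j, A i j * y i ^ 2 := by
    rw [sum_comm]; simp only [hsym.apply]
  have hexpand : ∑ i, ∑ j, A i j * (y i - y j) ^ 2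
      = ∑ i, ∑ j, A i j * y i ^ 2 + ∑ i, ∑ j, A i j * y j ^ 2
        - 2 * ∑ i, ∑ j, y i * A i j * y j := by
    simp only [mul_sum, ← sum_add_distrib, ← sum_sub_distrib]
    refine sum_congr rfl fun i _ => sum_congr rfl fun j _ => by ring
  simp only [Matrix.sub_apply, mul_sub, sub_mul, sum_sub_distrib, hdiag, hexpand, hswap]
  ring

theorem eq_of_pow_apply_ne_zero {y : V → ℝ} (hy : ∀ i j, A i j ≠ 0 → y i = y j) :
    ∀ (k : ℕ) (i j : V), (A ^ k) i j ≠ 0 → y i = y j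
  | 0, i, j, h => by
    rcases eq_or_ne i j with rfl | hij
    · rfl
    · simp [hij] at h
  | k + 1, i, j, h => by
    rw [pow_succ, mul_apply] at h
    obtain ⟨l, -, hl⟩ := exists_ne_zero_of_sum_ne_zero h
    exact (eq_of_pow_apply_ne_zero hy k i l (left_ne_zero_of_mul hl)).trans
      (hy l j (right_ne_zero_of_mul hl))

theorem eq_of_sum_mul_sub_sq_eq_zero (hnonneg : ∀ i j, 0 ≤ A i j)
    (hconn : ∀ i j, ∃ k : ℕ, (A ^ k) i j ≠ 0) {y : V → ℝ}
    (hy : ∑ i, ∑ j, A i j * (y i - y j) ^ 2 = 0) (i j : V) : y i = y j := by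
  have hterm : ∀ i j, 0 ≤ A i j * (y i - y j) ^ 2 := fun i j => by
    have := hnonneg i j; positivity
  have hedge : ∀ i j, A i j ≠ 0 → y i = y j := fun i j hij => by
    have hrow := (sum_eq_zero_iff_of_nonneg fun i _ => sum_nonneg fun j _ => hterm i j).1 hy i
      (mem_univ i)
    have := (sum_eq_zero_iff_of_nonneg fun j _ => hterm i j).1 hrow j (mem_univ j)
    simpa [hij, sub_eq_zero] using this
  obtain ⟨k, hk⟩ := hconn i j
  exact eq_of_pow_apply_ne_zero hedge k i j hk

theorem posDef_laplacian_submatrix (hsym : A.IsSymm) (hnonneg : ∀ i j, 0 ≤ A i j)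
    (hconn : ∀ i j, ∃ k : ℕ, (A ^ k) i j ≠ 0) (hdeg : ∀ i, deg i = ∑ j, A i j)
    {S : Finset V} (hS : S.Nonempty) :
    ((diagonal deg - A).submatrix (fun x : {i // i ∉ S} => (x : V))
      (fun x : {i // i ∉ S} => (x : V))).PosDef := by
  set L := diagonal deg - A
  have hLsymm : L.IsSymm := by
    simp only [L, IsSymm, transpose_sub, diagonal_transpose, hsym.eq]
  refine posDef_iff_dotProduct_mulVec.2
    ⟨isHermitian_iff_isSymm.2 (hLsymm.submatrix _), fun x hx => ?_⟩
  let y : V → ℝ := fun i => if h : i ∈ S then 0 else x ⟨i, h⟩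
  have hy : ∀ b : {i // i ∉ S}, y b = x b := fun b => dif_neg b.2
  have hyS : ∀ i ∉ Set.range ((↑) : {i // i ∉ S} → V), y i = 0 := fun i hi =>
    dif_pos (by simpa using hi)
  have hquad : star x ⬝ᵥ (L.submatrix Subtype.val Subtype.val *ᵥ x)
      = (1 / 2) * ∑ i, ∑ j, A i j * (y i - y j) ^ 2 := by
    rw [← sum_sum_mul_laplacian_mul hsym hdeg, ← Fintype.sum_sum_comp_of_injective
      ((↑) : {i // i ∉ S} → V) Subtype.val_injective _ (fun i hi j => by simp [hyS i hi])
      (fun j hj i => by simp [hyS j hj])]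
    simp [hy, dotProduct, mulVec, mul_sum, mul_assoc, L]
  have hnonneg_sum : 0 ≤ ∑ i, ∑ j, A i j * (y i - y j) ^ 2 :=
    sum_nonneg fun i _ => sum_nonneg fun j _ => mul_nonneg (hnonneg i j) (sq_nonneg _)
  obtain ⟨a, ha⟩ := Function.ne_iff.1 hx
  obtain ⟨s, hs⟩ := hS
  refine hquad ▸ lt_of_le_of_ne (mul_nonneg (by norm_num) hnonneg_sum) fun h => ha ?_
  have := eq_of_sum_mul_sub_sq_eq_zero hnonneg hconn (by linarith : _ = (0 : ℝ)) a s
  simpa [hy, hyS s (by simpa using hs)] using this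

end Laplacian

theorem Finset.range_impEmbedding_notMem_insert {V : Type*} [DecidableEq V] {S : Finset V}
    {u : V} (hu : u ∉ S) :
    Set.range (Subtype.impEmbedding (· ∉ insert u S) (· ∉ S)
      fun _ h hS => h (mem_insert_of_mem hS)) = {⟨u, hu⟩}ᶜ := by
  ext ⟨a, ha⟩
  simp only [Set.mem_range, Set.mem_compl_iff, Set.mem_singleton_iff, Subtype.mk.injEq]
  constructor
  · rintro ⟨⟨b, hb⟩, hba⟩ rfl
    have hba : b = a := congrArg Subtype.val hba
    exact hb (hba ▸ mem_insert_self a S)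
  · intro hau
    exact ⟨⟨a, by simp [hau, ha]⟩, rfl⟩

theorem marginal_gain_formula_general
    (n : ℕ)
    (A : Matrix (Fin n) (Fin n) ℝ)
    (hsym : A.IsSymm)
    (hnonneg : ∀ i j, 0 ≤ A i j)
    (hconn : ∀ i j : Fin n, ∃ k : ℕ, (A ^ k) i j ≠ 0)
    (deg : Fin n → ℝ) (hdeg : ∀ i, deg i = ∑ j, A i j)
    (d : ℝ)
    (pi' : Fin n → ℝ) (hpi : ∀ i, pi' i = deg i / d)
    (L : Matrix (Fin n) (Fin n) ℝ) (hL : L = Matrix.diagonal deg - A)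
    (S : Finset (Fin n)) (hS : S.Nonempty)
    (u : Fin n) (hu : u ∉ S) :
    gwcAlg n L pi' deg S - gwcAlg n L pi' deg (insert u S)
      = (∑ b : {i : Fin n // i ∉ S},
            ((L.submatrix (fun x : {i : Fin n // i ∉ S} => (x : Fin n))
                (fun x : {i : Fin n // i ∉ S} => (x : Fin n)))⁻¹ ⟨u, hu⟩ b) * deg b.1) ^ 2
        / (d *
            ((L.submatrix (fun x : {i : Fin n // i ∉ S} => (x : Fin n))
                (fun x : {i : Fin n // i ∉ S} => (x : Fin n)))⁻¹ ⟨u, hu⟩ ⟨u, hu⟩)) := by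
  obtain rfl : pi' = fun i => deg i / d := funext hpi
  subst hL
  set M := (diagonal deg - A).submatrix (fun x : {i // i ∉ S} => (x : Fin n))
    (fun x : {i // i ∉ S} => (x : Fin n))
  set u' : {i // i ∉ S} := ⟨u, hu⟩
  have hM : M.PosDef := posDef_laplacian_submatrix hsym hnonneg hconn hdeg hS
  have huu : M⁻¹ u' u' ≠ 0 := hM.inv.diag_pos.ne'
  let ι := Subtype.impEmbedding (· ∉ insert u S) (· ∉ S) fun _ h hS => h (mem_insert_of_mem hS)
  calc _ = ∑ a : {i // i ∉ S}, ∑ b : {i // i ∉ S}, deg a / d * M⁻¹ a b * deg b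
        - ∑ a : {i // i ∉ S}, ∑ b : {i // i ∉ S}, deg a / d * M⁻¹.pivotOut u' a b * deg b :=
        congrArg (_ - ·) <| sum_sum_mul_inv_submatrix_mul M ((isUnit_iff_isUnit_det M).1 hM.isUnit)
          huu ι ι.injective (Finset.range_impEmbedding_notMem_insert hu) (fun a => deg a / d)
          (fun a => deg a)
    _ = _ := sum_sum_mul_sub_sum_sum_mul_pivotOut
        (isHermitian_iff_isSymm.1 hM.isHermitian).inv u' (fun a => deg a) d

/-- For a connected weighted undirected graph with Laplacian `L`, a nonempty proper
vertex subset `S` and any vertex `u ∈ V∖S`, the marginal gain `Δ(u,S) = H(S) − H(S ∪ {u})`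
satisfies `Δ(u,S) = (e_uᵀ (L_{−S})⁻¹ d_{−S})² / (d · e_uᵀ (L_{−S})⁻¹ e_u)`. -/
theorem marginal_gain_formula
    (n : ℕ) (hn : 0 < n)
    (A : Matrix (Fin n) (Fin n) ℝ)
    (hsym : A.IsSymm)
    (hnonneg : ∀ i j, 0 ≤ A i j)
    (hloop : ∀ i, A i i = 0)
    (hconn : ∀ i j : Fin n, ∃ k : ℕ, (A ^ k) i j ≠ 0)
    (deg : Fin n → ℝ) (hdeg : ∀ i, deg i = ∑ j, A i j)
    (d : ℝ) (hd : d = ∑ i, deg i)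
    (pi' : Fin n → ℝ) (hpi : ∀ i, pi' i = deg i / d)
    (L : Matrix (Fin n) (Fin n) ℝ) (hL : L = Matrix.diagonal deg - A)
    (S : Finset (Fin n)) (hS : S.Nonempty) (hSproper : S ≠ Finset.univ)
    (u : Fin n) (hu : u ∉ S) :
    gwcAlg n L pi' deg S - gwcAlg n L pi' deg (insert u S)
      = (∑ b : {i : Fin n // i ∉ S},
            ((L.submatrix (fun x : {i : Fin n // i ∉ S} => (x : Fin n))
                (fun x : {i : Fin n // i ∉ S} => (x : Fin n)))⁻¹ ⟨u, hu⟩ b) * deg b.1) ^ 2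
        / (d *
            ((L.submatrix (fun x : {i : Fin n // i ∉ S} => (x : Fin n))
                (fun x : {i : Fin n // i ∉ S} => (x : Fin n)))⁻¹ ⟨u, hu⟩ ⟨u, hu⟩)) :=
  marginal_gain_formula_general n A hsym hnonneg hconn deg hdeg d pi' hpi L hL S hS u hu
end

section
/- Let G=(V,E,w) be a connected weighted undirected graph and k ≥ 2. Let S_1 = {u*} where u* minimizes H({u}) over u ∈ V, and for i = 2,...,k let S_i = S_{i−1} ∪ {argmax_{u∈V∖S_{i−1}} (H(S_{i−1}) − H(S_{i−1} ∪ {u}))} be the greedy sequence. Then the output S_k satisfies H({u*}) − H(S_k) ≥ (1 − (k/(k−1))·(1/e)) · (H({u*}) − H(S*)), where S* = argmin_{|S|=k} H(S). -/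
open Matrix BigOperators Finset

/-- Group walk centrality `H(S) = Σ_{i∈V} π_i H_{iS}`, where `HT S i = H_{iS}` is the group
hitting time of `S` from `i`. -/
noncomputable def gwcH (n : ℕ) (p : Fin n → ℝ) (HT : Finset (Fin n) → Fin n → ℝ)
    (S : Finset (Fin n)) : ℝ :=
  ∑ i, p i * HT S i

/-!
A function that is superharmonic for the random walk off a nonempty set `W` and nonnegative on
`W` is nonnegative everywhere: at a negative minimum, superharmonicity forces every neighbour
to take the minimal value too, so the minimum would spread along the edges of the connected
graph until it reached `W`. Applied to `H_{·W} - H_{·W'}` and to the second difference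
`H_{·W} - H_{·W∪u} - H_{·T} + H_{·T∪u}`, this makes group hitting times, and hence `H`,
antitone and supermodular on nonempty sets. For such a set function the Nemhauser–Wolsey–Fisher
argument applies: by supermodularity the gap `H(S) - H(S*)` is at most the sum of the `k` gains
of the elements of `S*`, so each greedy step closes at least a `1/k` fraction of it, and after
`k - 1` steps the gap has shrunk by `(1 - 1/k)^(k-1) ≤ (k/(k-1)) / e`.
-/

variable {ι : Type*}

theorem Matrix.mem_of_pow_apply_ne_zero [Fintype ι] [DecidableEq ι] {R : Type*} [Semiring R]
    (A : Matrix ι ι R) {M : Set ι} (hM : ∀ x ∈ M, ∀ l, A x l ≠ 0 → l ∈ M) :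
    ∀ (p : ℕ) {i l : ι}, i ∈ M → (A ^ p) i l ≠ 0 → l ∈ M
  | 0, i, l, hi, h => by
    obtain rfl : i = l := by
      by_contra hne
      exact h (one_apply_ne hne)
    exact hi
  | p + 1, i, l, hi, h => by
    rw [pow_succ, mul_apply] at h
    obtain ⟨x, -, hx⟩ := exists_ne_zero_of_sum_ne_zero h
    exact hM x (A.mem_of_pow_apply_ne_zero hM p hi (left_ne_zero_of_mul hx)) l
      (right_ne_zero_of_mul hx)

section RandomWalk

variable [Fintype ι] {A : Matrix ι ι ℝ} {deg : ι → ℝ}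

theorem eq_of_superharmonic_at_min (hA : ∀ i j, 0 ≤ A i j) (hdeg : ∀ i, deg i = ∑ j, A i j)
    {g : ι → ℝ} {x : ι} (hmin : ∀ j, g x ≤ g j) (hsuper : ∑ j, A x j / deg x * g j ≤ g x)
    {l : ι} (hxl : A x l ≠ 0) : g l = g x := by
  have hAxl : 0 < A x l := (hA x l).lt_of_ne' hxl
  have hdeg_pos : 0 < deg x :=
    hdeg x ▸ hAxl.trans_le (single_le_sum (fun j _ => hA x j) (mem_univ l))
  have hweights : ∑ j, A x j / deg x = 1 := by
    rw [← sum_div, ← hdeg, div_self hdeg_pos.ne']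
  have hterms : ∀ j ∈ univ, 0 ≤ A x j / deg x * (g j - g x) := fun j _ =>
    mul_nonneg (div_nonneg (hA x j) hdeg_pos.le) (sub_nonneg.2 (hmin j))
  have hsum : ∑ j, A x j / deg x * (g j - g x) = 0 := by
    refine le_antisymm ?_ (sum_nonneg hterms)
    simp only [mul_sub, sum_sub_distrib, ← sum_mul, hweights, one_mul]
    linarith
  have hl := (sum_eq_zero_iff_of_nonneg hterms).1 hsum l (mem_univ l)
  linarith [(mul_eq_zero.1 hl).resolve_left (div_pos hAxl hdeg_pos).ne']

theorem nonneg_of_superharmonic [DecidableEq ι] (hA : ∀ i j, 0 ≤ A i j)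
    (hdeg : ∀ i, deg i = ∑ j, A i j) (hconn : ∀ i j, ∃ p : ℕ, (A ^ p) i j ≠ 0)
    {W : Finset ι} (hW : W.Nonempty) {g : ι → ℝ}
    (hg_W : ∀ i ∈ W, 0 ≤ g i) (hsuper : ∀ i ∉ W, ∑ l, A i l / deg i * g l ≤ g i) (i : ι) :
    0 ≤ g i := by
  by_contra! hneg
  obtain ⟨i₀, -, hmin⟩ := exists_min_image univ g ⟨i, mem_univ i⟩
  have hm : g i₀ < 0 := (hmin i (mem_univ i)).trans_lt hneg
  have hclosed : ∀ x ∈ {x | g x = g i₀}, ∀ l, A x l ≠ 0 → l ∈ {x | g x = g i₀} := by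
    intro x (hx : g x = g i₀) l hxl
    have hxW : x ∉ W := fun hxW => (hg_W x hxW).not_gt (hx ▸ hm)
    exact (eq_of_superharmonic_at_min hA hdeg (fun j => hx ▸ hmin j (mem_univ j))
      (hsuper x hxW) hxl).trans hx
  obtain ⟨w, hw⟩ := hW
  obtain ⟨p, hp⟩ := hconn i₀ w
  have hgw : g w = g i₀ := A.mem_of_pow_apply_ne_zero hclosed p rfl hp
  linarith [hg_W w hw]

structure IsGroupHittingTime [DecidableEq ι] (A : Matrix ι ι ℝ) (deg : ι → ℝ)
    (HT : Finset ι → ι → ℝ) : Prop where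
  eq_zero : ∀ W : Finset ι, W.Nonempty → ∀ i ∈ W, HT W i = 0
  eq_one_add : ∀ W : Finset ι, W.Nonempty → ∀ i, i ∉ W →
    HT W i = 1 + ∑ l, (A i l / deg i) * HT W l

namespace IsGroupHittingTime

variable [DecidableEq ι] {HT : Finset ι → ι → ℝ} (hHT : IsGroupHittingTime A deg HT)
  (hA : ∀ i j, 0 ≤ A i j) (hdeg : ∀ i, deg i = ∑ j, A i j)
  (hconn : ∀ i j, ∃ p : ℕ, (A ^ p) i j ≠ 0)
include hHT hA hdeg hconn

theorem nonneg {W : Finset ι} (hW : W.Nonempty) (i : ι) : 0 ≤ HT W i :=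
  nonneg_of_superharmonic hA hdeg hconn hW (fun i hi => (hHT.eq_zero W hW i hi).ge)
    (fun i hi => by linarith [hHT.eq_one_add W hW i hi]) i

theorem antitone {W W' : Finset ι} (hW : W.Nonempty) (hWW' : W ⊆ W') (i : ι) :
    HT W' i ≤ HT W i := by
  have hW' : W'.Nonempty := hW.mono hWW'
  suffices 0 ≤ HT W i - HT W' i by linarith
  refine nonneg_of_superharmonic hA hdeg hconn hW' (g := fun j => HT W j - HT W' j)
    (fun j hj => ?_) (fun j hj => ?_) i
  · rw [hHT.eq_zero W' hW' j hj, sub_zero]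
    exact hHT.nonneg hA hdeg hconn hW j
  · rw [hHT.eq_one_add W hW j (fun h => hj (hWW' h)), hHT.eq_one_add W' hW' j hj]
    simp only [mul_sub, sum_sub_distrib]
    linarith

theorem supermodular {W T : Finset ι} (hW : W.Nonempty) (hWT : W ⊆ T) (u : ι) (i : ι) :
    HT T i - HT (insert u T) i ≤ HT W i - HT (insert u W) i := by
  have hT : T.Nonempty := hW.mono hWT
  suffices 0 ≤ HT W i - HT (insert u W) i - (HT T i - HT (insert u T) i) by linarith
  refine nonneg_of_superharmonic hA hdeg hconn (insert_nonempty u T)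
    (g := fun j => HT W j - HT (insert u W) j - (HT T j - HT (insert u T) j))
    (fun j hj => ?_) (fun j hj => ?_) i
  · rw [hHT.eq_zero (insert u T) (insert_nonempty u T) j hj]
    rcases mem_insert.1 hj with rfl | hjT
    · rw [hHT.eq_zero (insert j W) (insert_nonempty j W) j (mem_insert_self j W)]
      linarith [hHT.antitone hA hdeg hconn hW hWT j]
    · rw [hHT.eq_zero T hT j hjT]
      linarith [hHT.antitone hA hdeg hconn hW (subset_insert u W) j]
  · have hjT : j ∉ T := fun h => hj (mem_insert_of_mem h)
    have hjW : j ∉ W := fun h => hjT (hWT h)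
    have hjuW : j ∉ insert u W := fun h => hj (insert_subset_insert u hWT h)
    rw [hHT.eq_one_add W hW j hjW, hHT.eq_one_add T hT j hjT,
      hHT.eq_one_add _ (insert_nonempty u W) j hjuW,
      hHT.eq_one_add _ (insert_nonempty u T) j hj]
    simp only [mul_sub, sum_sub_distrib]
    linarith

end IsGroupHittingTime

end RandomWalk

section Greedy

variable [DecidableEq ι] {f : Finset ι → ℝ}
  (hanti : ∀ W W' : Finset ι, W.Nonempty → W ⊆ W' → f W' ≤ f W)
  (hsup : ∀ W T : Finset ι, W.Nonempty → W ⊆ T → ∀ u, f T - f (insert u T) ≤ f W - f (insert u W))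

include hsup in
theorem sub_union_le_sum_sub_insert {W : Finset ι} (hW : W.Nonempty) (B : Finset ι) :
    f W - f (W ∪ B) ≤ ∑ u ∈ B, (f W - f (insert u W)) := by
  induction B using Finset.induction_on with
  | empty => simp
  | insert a B ha ih =>
    rw [union_insert, sum_insert ha]
    linarith [hsup W (W ∪ B) hW subset_union_left a]

include hanti hsup in
theorem greedy_step_gap_le {S O : Finset ι} (hS : S.Nonempty) (hO : O.Nonempty) {u : ι}
    (hu : ∀ v ∉ S, f S - f (insert v S) ≤ f S - f (insert u S)) :
    f (insert u S) - f O ≤ (1 - 1 / #O) * (f S - f O) := by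
  set δ := f S - f (insert u S)
  have hgain : ∀ v, f S - f (insert v S) ≤ δ := by
    intro v
    by_cases hv : v ∈ S
    · rw [insert_eq_of_mem hv, sub_self]
      linarith [hanti S (insert u S) hS (subset_insert u S)]
    · exact hu v hv
  have hcard : (0 : ℝ) < #O := by exact_mod_cast hO.card_pos
  have hgap : f S - f O ≤ #O * δ :=
    calc f S - f O ≤ f S - f (S ∪ O) := by linarith [hanti O (S ∪ O) hO subset_union_right]
      _ ≤ ∑ v ∈ O, (f S - f (insert v S)) := sub_union_le_sum_sub_insert hsup hS O
      _ ≤ #O * δ := by simpa using sum_le_card_nsmul O _ δ fun v _ => hgain v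
  have hδ : (f S - f O) / #O ≤ δ := by rwa [div_le_iff₀ hcard, mul_comm]
  have hr : (1 - 1 / #O) * (f S - f O) = f S - f O - (f S - f O) / #O := by ring
  linarith

include hanti hsup in
theorem greedy_gap_le_pow {O : Finset ι} (hO : O.Nonempty) {S : ℕ → Finset ι}
    (hS1 : (S 1).Nonempty)
    (hgreedy : ∀ i, 1 ≤ i → i < #O → ∃ u, S (i + 1) = insert u (S i) ∧
      ∀ v, v ∉ S i → f (S i) - f (insert v (S i)) ≤ f (S i) - f (insert u (S i))) :
    ∀ j, j + 1 ≤ #O →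
      (S (j + 1)).Nonempty ∧ f (S (j + 1)) - f O ≤ (1 - 1 / #O) ^ j * (f (S 1) - f O)
  | 0, _ => by simpa using hS1
  | j + 1, hj => by
    obtain ⟨hne, hgap⟩ := greedy_gap_le_pow hO hS1 hgreedy j (by omega)
    obtain ⟨u, hstep, hu⟩ := hgreedy (j + 1) (by omega) (by omega)
    have hr : (0 : ℝ) ≤ 1 - 1 / #O := by
      rw [sub_nonneg, div_le_one (by exact_mod_cast hO.card_pos)]
      exact_mod_cast hO.card_pos
    refine ⟨hstep ▸ insert_nonempty u _, ?_⟩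
    calc f (S (j + 1 + 1)) - f O ≤ (1 - 1 / #O) * (f (S (j + 1)) - f O) :=
          hstep ▸ greedy_step_gap_le hanti hsup hne hO hu
      _ ≤ (1 - 1 / #O) * ((1 - 1 / #O) ^ j * (f (S 1) - f O)) := by gcongr
      _ = (1 - 1 / #O) ^ (j + 1) * (f (S 1) - f O) := by ring

end Greedy

theorem one_sub_inv_pow_pred_le {k : ℕ} (hk : 2 ≤ k) :
    (1 - 1 / (k : ℝ)) ^ (k - 1) ≤ (k : ℝ) / (k - 1) * (1 / Real.exp 1) := by
  have hk' : (1 : ℝ) < k := by exact_mod_cast hk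
  have hr : (0 : ℝ) < 1 - 1 / k := by
    rw [sub_pos, div_lt_one (by linarith)]
    exact hk'
  have hpow := Real.one_sub_div_pow_le_exp_neg (n := k) (t := 1) hk'.le
  rw [← Nat.sub_add_cancel (by omega : 1 ≤ k), pow_succ, Nat.sub_add_cancel (by omega : 1 ≤ k),
    ← le_div_iff₀ hr, Real.exp_neg] at hpow
  refine hpow.trans_eq ?_
  have : (k : ℝ) - 1 ≠ 0 := by linarith
  field_simp

section Centrality

variable {n : ℕ} {p : Fin n → ℝ} {HT : Finset (Fin n) → Fin n → ℝ}

theorem gwcH_le_gwcH (hp : ∀ i, 0 ≤ p i) {S S' : Finset (Fin n)}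
    (h : ∀ i, HT S' i ≤ HT S i) : gwcH n p HT S' ≤ gwcH n p HT S :=
  sum_le_sum fun i _ => mul_le_mul_of_nonneg_left (h i) (hp i)

theorem gwcH_sub_le_gwcH_sub (hp : ∀ i, 0 ≤ p i) {S S' T T' : Finset (Fin n)}
    (h : ∀ i, HT T i - HT T' i ≤ HT S i - HT S' i) :
    gwcH n p HT T - gwcH n p HT T' ≤ gwcH n p HT S - gwcH n p HT S' := by
  simp only [gwcH, ← sum_sub_distrib, ← mul_sub]
  exact sum_le_sum fun i _ => mul_le_mul_of_nonneg_left (h i) (hp i)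

end Centrality

theorem greedy_gwc_guarantee_general
    (n : ℕ)
    (A : Matrix (Fin n) (Fin n) ℝ)
    (hnonneg : ∀ i j, 0 ≤ A i j)
    (hconn : ∀ i j : Fin n, ∃ p : ℕ, (A ^ p) i j ≠ 0)
    (deg : Fin n → ℝ) (hdeg : ∀ i, deg i = ∑ j, A i j)
    (d : ℝ) (hd : d = ∑ i, deg i)
    (pi' : Fin n → ℝ) (hpi : ∀ i, pi' i = deg i / d)
    (HT : Finset (Fin n) → Fin n → ℝ)
    (hHT0 : ∀ W : Finset (Fin n), W.Nonempty → ∀ i ∈ W, HT W i = 0)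
    (hHTrec : ∀ W : Finset (Fin n), W.Nonempty → ∀ i, i ∉ W →
      HT W i = 1 + ∑ l, (A i l / deg i) * HT W l)
    (k : ℕ) (hk : 2 ≤ k)
    (ustar : Fin n)
    (Sopt : Finset (Fin n)) (hSoptcard : Sopt.card = k)
    (hSoptmin : ∀ T : Finset (Fin n), T.card = k → gwcH n pi' HT Sopt ≤ gwcH n pi' HT T)
    (Sseq : ℕ → Finset (Fin n))
    (hS1 : Sseq 1 = {ustar})
    (hgreedy : ∀ i, 1 ≤ i → i < k → ∃ u, u ∉ Sseq i ∧
      Sseq (i + 1) = insert u (Sseq i) ∧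
      ∀ v, v ∉ Sseq i →
        gwcH n pi' HT (Sseq i) - gwcH n pi' HT (insert v (Sseq i))
          ≤ gwcH n pi' HT (Sseq i) - gwcH n pi' HT (insert u (Sseq i))) :
    (1 - ((k : ℝ) / ((k : ℝ) - 1)) * (1 / Real.exp 1)) *
        (gwcH n pi' HT {ustar} - gwcH n pi' HT Sopt)
      ≤ gwcH n pi' HT {ustar} - gwcH n pi' HT (Sseq k) := by
  have hHT : IsGroupHittingTime A deg HT := ⟨hHT0, hHTrec⟩
  have hdeg_nonneg : ∀ i, 0 ≤ deg i := fun i => hdeg i ▸ sum_nonneg fun j _ => hnonneg i j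
  have hpi_nonneg : ∀ i, 0 ≤ pi' i := fun i =>
    hpi i ▸ div_nonneg (hdeg_nonneg i) (hd ▸ sum_nonneg fun j _ => hdeg_nonneg j)
  have hanti : ∀ W W', W.Nonempty → W ⊆ W' → gwcH n pi' HT W' ≤ gwcH n pi' HT W :=
    fun _ _ hW hWW' => gwcH_le_gwcH hpi_nonneg (hHT.antitone hnonneg hdeg hconn hW hWW')
  have hsup : ∀ W T, W.Nonempty → W ⊆ T → ∀ u, gwcH n pi' HT T - gwcH n pi' HT (insert u T)
      ≤ gwcH n pi' HT W - gwcH n pi' HT (insert u W) := fun _ _ hW hWT u =>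
    gwcH_sub_le_gwcH_sub hpi_nonneg (hHT.supermodular hnonneg hdeg hconn hW hWT u)
  have hSopt : Sopt.Nonempty := card_pos.1 (by omega)
  have hgap_nonneg : gwcH n pi' HT Sopt ≤ gwcH n pi' HT {ustar} := by
    obtain ⟨T, hT, hTcard⟩ := exists_superset_card_eq (s := {ustar}) (n := k)
      (by rw [card_singleton]; omega) (by simpa [hSoptcard] using card_le_univ Sopt)
    exact (hSoptmin T hTcard).trans (hanti _ T (singleton_nonempty ustar) hT)
  obtain ⟨-, hdecay⟩ := greedy_gap_le_pow hanti hsup hSopt (hS1 ▸ singleton_nonempty ustar)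
    (fun i hi hik => (hgreedy i hi (hSoptcard ▸ hik)).imp fun _ => And.right) (k - 1)
    (by omega)
  rw [hSoptcard, Nat.sub_add_cancel (by omega), hS1] at hdecay
  linarith [mul_le_mul_of_nonneg_right (one_sub_inv_pow_pred_le hk) (sub_nonneg.2 hgap_nonneg)]

/-- For a connected weighted undirected graph and `k ≥ 2`, the greedy sequence
`S_1 = {u*}` (with `u*` minimizing `H({u})`) and `S_i = S_{i−1} ∪ {argmax marginal gain}`
satisfies `H({u*}) − H(S_k) ≥ (1 − (k/(k−1))·(1/e)) · (H({u*}) − H(S*))`, where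
`S* = argmin_{|S|=k} H(S)`.  Group hitting times `HT S i = H_{iS}` are characterized by
vanishing on `S` and the first-step recurrence. -/
theorem greedy_gwc_guarantee
    (n : ℕ) (hn : 0 < n)
    (A : Matrix (Fin n) (Fin n) ℝ)
    (hsym : A.IsSymm)
    (hnonneg : ∀ i j, 0 ≤ A i j)
    (hloop : ∀ i, A i i = 0)
    (hconn : ∀ i j : Fin n, ∃ p : ℕ, (A ^ p) i j ≠ 0)
    (deg : Fin n → ℝ) (hdeg : ∀ i, deg i = ∑ j, A i j)
    (d : ℝ) (hd : d = ∑ i, deg i)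
    (pi' : Fin n → ℝ) (hpi : ∀ i, pi' i = deg i / d)
    (HT : Finset (Fin n) → Fin n → ℝ)
    (hHT0 : ∀ W : Finset (Fin n), W.Nonempty → ∀ i ∈ W, HT W i = 0)
    (hHTrec : ∀ W : Finset (Fin n), W.Nonempty → ∀ i, i ∉ W →
      HT W i = 1 + ∑ l, (A i l / deg i) * HT W l)
    (k : ℕ) (hk : 2 ≤ k)
    (ustar : Fin n)
    (hustar : ∀ v : Fin n, gwcH n pi' HT {ustar} ≤ gwcH n pi' HT {v})
    (Sopt : Finset (Fin n)) (hSoptcard : Sopt.card = k)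
    (hSoptmin : ∀ T : Finset (Fin n), T.card = k → gwcH n pi' HT Sopt ≤ gwcH n pi' HT T)
    (Sseq : ℕ → Finset (Fin n))
    (hS1 : Sseq 1 = {ustar})
    (hgreedy : ∀ i, 1 ≤ i → i < k → ∃ u, u ∉ Sseq i ∧
      Sseq (i + 1) = insert u (Sseq i) ∧
      ∀ v, v ∉ Sseq i →
        gwcH n pi' HT (Sseq i) - gwcH n pi' HT (insert v (Sseq i))
          ≤ gwcH n pi' HT (Sseq i) - gwcH n pi' HT (insert u (Sseq i))) :
    (1 - ((k : ℝ) / ((k : ℝ) - 1)) * (1 / Real.exp 1)) *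
        (gwcH n pi' HT {ustar} - gwcH n pi' HT Sopt)
      ≤ gwcH n pi' HT {ustar} - gwcH n pi' HT (Sseq k) :=
  greedy_gwc_guarantee_general n A hnonneg hconn deg hdeg d hd pi' hpi HT hHT0 hHTrec k hk ustar
    Sopt hSoptcard hSoptmin Sseq hS1 hgreedy
end

section
/- Let G=(V,E,w) be a connected weighted undirected graph with n vertices, Laplacian L, and minimum edge weight w_min. Then for an arbitrary nonempty proper subset S ⊆ V of vertices and an arbitrary vector v ∈ R^{n−|S|}, each coordinate satisfies v_i² ≤ (n / w_min) · v^T L_{−S} v. -/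
/-!
Extend `v` by zero on `S` to a vector `x` on all vertices; the reduced quadratic form is then the
full Laplacian form `xᵀ L x = ½ ∑ₐ ∑_b A a b (x a - x b)²`. Pick a vertex `s ∈ S`, where `x`
vanishes, and a path from `i` to `s`. Telescoping and Cauchy–Schwarz bound `x i ²` by the length
of the path (less than `n`) times the sum of the squared differences over its darts. Every edge of
the path has weight at least `wmin`, and a path never traverses an edge twice, so the weighted sum
over its darts is at most half of the double sum, i.e. at most `xᵀ L x`.
-/

open Matrix Finset SimpleGraph

theorem Matrix.sum_sum_submatrix_val_eq_sum_sum_extend {ι R : Type*} [Fintype ι]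
    [NonUnitalNonAssocSemiring R] (M : Matrix ι ι R) (p : ι → Prop)
    [DecidablePred p] (v : Subtype p → R) :
    ∑ a, ∑ b, v a * M.submatrix Subtype.val Subtype.val a b * v b =
      ∑ a, ∑ b, Subtype.val.extend v 0 a * M a b * Subtype.val.extend v 0 b := by
  set x : ι → R := Subtype.val.extend v 0
  have hx (a : Subtype p) : x a = v a := Subtype.val_injective.extend_apply v 0 a
  have hx₀ (a : ι) (ha : ¬p a) : x a = 0 :=
    Function.extend_apply' _ _ _ fun ⟨b, hb⟩ => ha (hb ▸ b.2)
  have sum_restrict (f : ι → R) (hf : ∀ a, ¬p a → f a = 0) :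
      ∑ a : Subtype p, f a = ∑ a, f a := by
    rw [← sum_subtype {a | p a} (by simp),
      sum_filter_of_ne fun a _ h => by_contra fun ha => h (hf a ha)]
  rw [← sum_restrict _ fun a ha => sum_eq_zero fun b _ => by rw [hx₀ a ha, zero_mul, zero_mul]]
  refine sum_congr rfl fun a _ => ?_
  rw [← sum_restrict _ fun b hb => by rw [hx₀ b hb, mul_zero]]
  simp only [submatrix_apply, hx]

theorem Matrix.two_mul_sum_sum_laplacian {ι R : Type*} [Fintype ι] [DecidableEq ι] [CommRing R]
    (A : Matrix ι ι R) (hA : A.IsSymm) (x : ι → R) :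
    2 * ∑ a, ∑ b, x a * (diagonal (fun a => ∑ b, A a b) - A) a b * x b =
      ∑ a, ∑ b, A a b * (x a - x b) ^ 2 := by
  have hdiag : ∑ a, ∑ b, x a * diagonal (fun a => ∑ b, A a b) a b * x b =
      ∑ a, ∑ b, A a b * x a ^ 2 := by
    simp only [diagonal_apply, mul_ite, ite_mul, mul_zero, zero_mul, sum_ite_eq, mem_univ,
      if_true, sum_mul, mul_sum]
    exact sum_congr rfl fun a _ => sum_congr rfl fun b _ => by ring
  have hswap : ∑ a, ∑ b, A a b * x b ^ 2 = ∑ a, ∑ b, A a b * x a ^ 2 := by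
    rw [sum_comm]
    simp only [hA.apply]
  calc 2 * ∑ a, ∑ b, x a * (diagonal (fun a => ∑ b, A a b) - A) a b * x b
      = ∑ a, ∑ b, A a b * x a ^ 2 + ∑ a, ∑ b, A a b * x b ^ 2
          - 2 * ∑ a, ∑ b, x a * A a b * x b := by
        simp only [sub_apply, mul_sub, sub_mul, sum_sub_distrib, hdiag, hswap]
        ring
    _ = ∑ a, ∑ b, A a b * (x a - x b) ^ 2 := by
        simp only [mul_sum, ← sum_add_distrib, ← sum_sub_distrib]
        exact sum_congr rfl fun a _ => sum_congr rfl fun b _ => by ring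

theorem Matrix.reachable_fromRel_of_pow_apply_ne_zero {ι R : Type*} [Fintype ι] [DecidableEq ι]
    [Semiring R] (A : Matrix ι ι R) {k : ℕ} {a b : ι} (h : (A ^ k) a b ≠ 0) :
    (fromRel fun a b => A a b ≠ 0).Reachable a b := by
  induction k generalizing b with
  | zero =>
    obtain rfl : a = b := by_contra fun hab => h (by simp [one_apply_ne hab])
    rfl
  | succ k ih =>
    rw [pow_succ, mul_apply] at h
    obtain ⟨m, -, hm⟩ := exists_ne_zero_of_sum_ne_zero h
    refine (ih (left_ne_zero_of_mul hm)).trans ?_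
    obtain rfl | hmb := eq_or_ne m b
    · rfl
    · exact Adj.reachable ((fromRel_adj _ _ _).2 ⟨hmb, .inl (right_ne_zero_of_mul hm)⟩)

namespace SimpleGraph.Walk

variable {V R : Type*} {G : SimpleGraph V} {u v : V}

theorem sum_darts_sub [AddCommGroup R] (p : G.Walk u v) (f : V → R) :
    (p.darts.map fun d => f d.fst - f d.snd).sum = f u - f v := by
  induction p with
  | nil => simp
  | cons _ p ih =>
    rw [darts_cons, List.map_cons, List.sum_cons, ih]
    abel

theorem IsPath.sq_sub_le_length_mul_sum_darts [Ring R] [LinearOrder R]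
    [IsStrictOrderedRing R] {p : G.Walk u v} (hp : p.IsPath) (f : V → R) :
    (f u - f v) ^ 2 ≤ p.length * (p.darts.map fun d => (f d.fst - f d.snd) ^ 2).sum := by
  classical
  have hnodup := darts_nodup_of_support_nodup hp.support_nodup
  rw [← p.sum_darts_sub f, ← List.sum_toFinset _ hnodup, ← List.sum_toFinset _ hnodup,
    ← length_darts, ← List.toFinset_card_of_nodup hnodup]
  exact sq_sum_le_card_mul_sum_sq

theorem IsPath.nodup_darts_append_darts_reverse {p : G.Walk u v} (hp : p.IsPath) :
    (p.darts ++ p.reverse.darts).Nodup := by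
  refine List.nodup_append.2 ⟨darts_nodup_of_support_nodup hp.support_nodup,
    darts_nodup_of_support_nodup hp.reverse.support_nodup, fun d hd d' hd' hdd' => ?_⟩
  subst hdd'
  exact d.symm_ne <|
    List.inj_on_of_nodup_map hp.isTrail.edges_nodup (mem_darts_reverse.1 hd') hd d.edge_symm

theorem IsPath.two_mul_sum_darts_le_sum_sum [Fintype V] [Semiring R] [PartialOrder R]
    [IsOrderedRing R] {p : G.Walk u v} (hp : p.IsPath) (g : V → V → R)
    (hg : ∀ a b, g a b = g b a) (hg₀ : ∀ a b, 0 ≤ g a b) :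
    2 * (p.darts.map fun d => g d.fst d.snd).sum ≤ ∑ a, ∑ b, g a b := by
  classical
  have hnodup := (List.nodup_map_iff Dart.toProd_injective).2
    hp.nodup_darts_append_darts_reverse
  calc 2 * (p.darts.map fun d => g d.fst d.snd).sum
      = ((p.darts ++ p.reverse.darts).map Dart.toProd |>.map fun q => g q.1 q.2).sum := by
        simp [darts_reverse, Function.comp_def, hg, two_mul]
    _ = ∑ q ∈ ((p.darts ++ p.reverse.darts).map Dart.toProd).toFinset, g q.1 q.2 :=
        (List.sum_toFinset _ hnodup).symm
    _ ≤ ∑ q : V × V, g q.1 q.2 := sum_le_univ_sum_of_nonneg fun q => hg₀ q.1 q.2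
    _ = ∑ a, ∑ b, g a b := Fintype.sum_prod_type _

end SimpleGraph.Walk

theorem Matrix.mul_sq_sub_le_card_mul_sum_sum_laplacian {ι : Type*} [Fintype ι] [DecidableEq ι]
    (A : Matrix ι ι ℝ) (hA : A.IsSymm) (hA₀ : ∀ a b, 0 ≤ A a b) {w : ℝ} (hw₀ : 0 ≤ w)
    (hw : ∀ a b, A a b ≠ 0 → w ≤ A a b) {u v : ι}
    (huv : (fromRel fun a b => A a b ≠ 0).Reachable u v) (x : ι → ℝ) :
    w * (x u - x v) ^ 2 ≤
      Fintype.card ι * ∑ a, ∑ b, x a * (diagonal (fun a => ∑ b, A a b) - A) a b * x b := by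
  obtain ⟨p⟩ := huv
  set q := p.bypass
  have hq : q.IsPath := p.bypass_isPath
  set D := (q.darts.map fun d => (x d.fst - x d.snd) ^ 2).sum
  set P := (q.darts.map fun d => A d.fst d.snd * (x d.fst - x d.snd) ^ 2).sum
  have hweight : w * D ≤ P := by
    rw [← List.sum_map_mul_left]
    refine List.sum_le_sum fun d _ => mul_le_mul_of_nonneg_right (hw _ _ ?_) (sq_nonneg _)
    obtain ⟨-, h | h⟩ := (fromRel_adj _ _ _).1 d.adj
    exacts [h, hA.apply d.fst d.snd ▸ h]
  have hP : 2 * P ≤ 2 * ∑ a, ∑ b, x a * (diagonal (fun a => ∑ b, A a b) - A) a b * x b := by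
    rw [two_mul_sum_sum_laplacian A hA x]
    exact hq.two_mul_sum_darts_le_sum_sum (fun a b => A a b * (x a - x b) ^ 2)
      (fun a b => by rw [hA.apply a b]; ring) fun a b => mul_nonneg (hA₀ a b) (sq_nonneg _)
  have hlen : (q.length : ℝ) ≤ Fintype.card ι := by exact_mod_cast hq.length_lt.le
  have hP₀ : 0 ≤ P := List.sum_nonneg fun _ hc => by
    obtain ⟨d, -, rfl⟩ := List.mem_map.1 hc
    exact mul_nonneg (hA₀ _ _) (sq_nonneg _)
  calc w * (x u - x v) ^ 2 ≤ w * (q.length * D) :=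
        mul_le_mul_of_nonneg_left (hq.sq_sub_le_length_mul_sum_darts x) hw₀
    _ = q.length * (w * D) := by ring
    _ ≤ q.length * P := mul_le_mul_of_nonneg_left hweight (Nat.cast_nonneg _)
    _ ≤ Fintype.card ι * P := mul_le_mul_of_nonneg_right hlen hP₀
    _ ≤ _ := mul_le_mul_of_nonneg_left (by linarith) (Nat.cast_nonneg _)

theorem reduced_laplacian_coordinate_bound_general
    (n : ℕ)
    (A : Matrix (Fin n) (Fin n) ℝ)
    (hsym : A.IsSymm)
    (hnonneg : ∀ i j, 0 ≤ A i j)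
    (hconn : ∀ i j : Fin n, ∃ k : ℕ, (A ^ k) i j ≠ 0)
    (deg : Fin n → ℝ) (hdeg : ∀ i, deg i = ∑ j, A i j)
    (L : Matrix (Fin n) (Fin n) ℝ) (hL : L = Matrix.diagonal deg - A)
    (wmin : ℝ)
    (hwminle : ∀ i j, A i j ≠ 0 → wmin ≤ A i j)
    (hwminmem : ∃ i j, A i j ≠ 0 ∧ A i j = wmin)
    (S : Finset (Fin n)) (hS : S.Nonempty)
    (v : {i : Fin n // i ∉ S} → ℝ) (i : {i : Fin n // i ∉ S}) :
    (v i) ^ 2 ≤ ((n : ℝ) / wmin) *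
      (∑ a : {i : Fin n // i ∉ S}, ∑ b : {i : Fin n // i ∉ S},
        v a * ((L.submatrix (fun x : {i : Fin n // i ∉ S} => (x : Fin n))
            (fun x : {i : Fin n // i ∉ S} => (x : Fin n))) a b) * v b) := by
  obtain ⟨s, hs⟩ := hS
  obtain ⟨k, hk⟩ := hconn i s
  obtain ⟨a₀, b₀, hne, rfl⟩ := hwminmem
  have hw : 0 < A a₀ b₀ := (hnonneg a₀ b₀).lt_of_ne' hne
  obtain rfl : deg = fun a => ∑ b, A a b := funext hdeg
  subst hL
  set x : Fin n → ℝ := Subtype.val.extend v 0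
  have hxs : x s = 0 := Function.extend_apply' _ _ _ fun ⟨b, hb⟩ => b.2 (hb ▸ hs)
  have hbound := mul_sq_sub_le_card_mul_sum_sum_laplacian A hsym hnonneg hw.le hwminle
    (reachable_fromRel_of_pow_apply_ne_zero A hk) x
  have hxi : x i = v i := Subtype.val_injective.extend_apply v 0 i
  rw [hxs, sub_zero, hxi, Fintype.card_fin] at hbound
  rw [sum_sum_submatrix_val_eq_sum_sum_extend, div_mul_eq_mul_div, le_div_iff₀ hw]
  linarith

/-- For a connected weighted undirected graph with `n` vertices, Laplacian `L`, and
minimum edge weight `w_min`, for an arbitrary nonempty proper subset `S ⊆ V` of vertices and an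
arbitrary vector `v ∈ ℝ^{n−|S|}`, each coordinate satisfies
`v_i² ≤ (n / w_min) · vᵀ L_{−S} v`. -/
theorem reduced_laplacian_coordinate_bound
    (n : ℕ) (hn : 0 < n)
    (A : Matrix (Fin n) (Fin n) ℝ)
    (hsym : A.IsSymm)
    (hnonneg : ∀ i j, 0 ≤ A i j)
    (hloop : ∀ i, A i i = 0)
    (hconn : ∀ i j : Fin n, ∃ k : ℕ, (A ^ k) i j ≠ 0)
    (deg : Fin n → ℝ) (hdeg : ∀ i, deg i = ∑ j, A i j)
    (L : Matrix (Fin n) (Fin n) ℝ) (hL : L = Matrix.diagonal deg - A)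
    (wmin : ℝ)
    (hwminle : ∀ i j, A i j ≠ 0 → wmin ≤ A i j)
    (hwminmem : ∃ i j, A i j ≠ 0 ∧ A i j = wmin)
    (S : Finset (Fin n)) (hS : S.Nonempty) (hSproper : S ≠ Finset.univ)
    (v : {i : Fin n // i ∉ S} → ℝ) (i : {i : Fin n // i ∉ S}) :
    (v i) ^ 2 ≤ ((n : ℝ) / wmin) *
      (∑ a : {i : Fin n // i ∉ S}, ∑ b : {i : Fin n // i ∉ S},
        v a * ((L.submatrix (fun x : {i : Fin n // i ∉ S} => (x : Fin n))
            (fun x : {i : Fin n // i ∉ S} => (x : Fin n))) a b) * v b) :=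
  reduced_laplacian_coordinate_bound_general n A hsym hnonneg hconn deg hdeg L hL wmin hwminle
    hwminmem S hS v i
end
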